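/- arXiv:q-alg/9412004 — 7 statements merged into one kernel-verified Lean document; each statement's English description precedes it below -/
import Mathlib

section
/- Let A be a Hopf algebra over ℂ with counit ε, H a right A-comodule algebra with coaction F, and ρ : A → H a linear map with ρ(1) = 0 satisfying ρ(a)φ = Σ_k φ_k ρ(a c_k) for all a ∈ ker ε and all φ ∈ H, where F(φ) = Σ_k φ_k ⊗ c_k. Then the formula Δ(φ) = Σ_k φ_k ρ(c_k) defines a derivation Δ : H → H, i.e. Δ(φψ) = Δ(φ)ψ + φΔ(ψ). -/
open TensorProduct

noncomputable section

variable {A H : Type*} [Ring A] [HopfAlgebra ℂ A] [Ring H] [Algebra ℂ H]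

/-- The comodule axioms for a coaction `F : H → H ⊗ A`:
`(F ⊗ id)F = (id ⊗ Δ)F` and `(id ⊗ ε)F = id`. -/
def IsCoaction (F : H →ₐ[ℂ] H ⊗[ℂ] A) : Prop :=
  (∀ φ : H, LinearMap.rTensor A F.toLinearMap (F φ) =
      (TensorProduct.assoc ℂ H A A).symm
        (LinearMap.lTensor H (Coalgebra.comul (R := ℂ)) (F φ))) ∧
  (∀ φ : H, TensorProduct.rid ℂ H
      (LinearMap.lTensor H (Coalgebra.counit (R := ℂ)) (F φ)) = φ)

/-- Freeness of the coaction: every `1 ⊗ a` is of the form `Σᵢ qᵢ F(bᵢ)`. -/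
def IsFree (F : H →ₐ[ℂ] H ⊗[ℂ] A) : Prop :=
  ∀ a : A, ∃ (n : ℕ) (q b : Fin n → H),
    ∑ i, ((q i) ⊗ₜ[ℂ] (1 : A)) * F (b i) = (1 : H) ⊗ₜ[ℂ] a

/-- The Sweedler-type operator `φ ↦ Σ_k φ_k ρ(c_k)` where `F φ = Σ_k φ_k ⊗ c_k`. -/
def sw (F : H →ₐ[ℂ] H ⊗[ℂ] A) (ρ : A →ₗ[ℂ] H) (φ : H) : H :=
  LinearMap.mul' ℂ H (LinearMap.lTensor H ρ (F φ))

/-- The right adjoint coaction `ad a = a⁽²⁾ ⊗ κ(a⁽¹⁾)a⁽³⁾`. -/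
def adc : A →ₗ[ℂ] A ⊗[ℂ] A :=
  (LinearMap.lTensor A (LinearMap.mul' ℂ A)) ∘ₗ
  (TensorProduct.leftComm ℂ A A A).toLinearMap ∘ₗ
  (LinearMap.rTensor (A ⊗[ℂ] A) (HopfAlgebra.antipode (R := ℂ))) ∘ₗ
  (LinearMap.lTensor A (Coalgebra.comul (R := ℂ))) ∘ₗ (Coalgebra.comul (R := ℂ))

/-!  STATEMENT 3: if `ρ : A → H` satisfies `ρ(a)φ = Σ_k φ_k ρ(a c_k)` for all
`a ∈ ker ε` and `ρ(1) = 0`, then `Δ(φ) = Σ_k φ_k ρ(c_k)` is a derivation. -/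

theorem sweedler_operator_is_derivation
    (F : H →ₐ[ℂ] H ⊗[ℂ] A) (hco : IsCoaction F)
    (ρ : A →ₗ[ℂ] H) (hρ1 : ρ 1 = 0)
    (hcom : ∀ a : A, Coalgebra.counit (R := ℂ) a = 0 → ∀ φ : H,
      ρ a * φ = sw F (ρ ∘ₗ LinearMap.mulLeft ℂ a) φ) :
    ∀ φ ψ : H, sw F ρ (φ * ψ) = sw F ρ φ * ψ + φ * sw F ρ ψ := by
  intro φ ψ
  set T : H ⊗[ℂ] A →ₗ[ℂ] H := LinearMap.mul' ℂ H ∘ₗ LinearMap.lTensor H ρ with hT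
  have L0 : ∀ (φ' : H) (w : H ⊗[ℂ] A), T ((φ' ⊗ₜ[ℂ] (1:A)) * w) = φ' * T w := by
    intro φ' w
    induction w using TensorProduct.induction_on with
    | zero => simp
    | tmul h d => simp [hT, Algebra.TensorProduct.tmul_mul_tmul, mul_assoc]
    | add x y hx hy => simp [mul_add, hx, hy]
  have L2 : ∀ (a : A) (w : H ⊗[ℂ] A),
      LinearMap.mul' ℂ H (LinearMap.lTensor H (ρ ∘ₗ LinearMap.mulLeft ℂ a) w) =
      T (((1:H) ⊗ₜ[ℂ] a) * w) := by
    intro a w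
    induction w using TensorProduct.induction_on with
    | zero => simp
    | tmul h d => simp [hT, Algebra.TensorProduct.tmul_mul_tmul]
    | add x y hx hy => simp [mul_add, hx, hy]
  have L1 : ∀ a : A, ρ a * ψ =
      T (((1:H) ⊗ₜ[ℂ] a) * F ψ) - (Coalgebra.counit (R := ℂ) a) • T (F ψ) := by
    intro a
    set c : ℂ := Coalgebra.counit (R := ℂ) a with hc
    have ha : Coalgebra.counit (R := ℂ) (a - c • (1:A)) = 0 := by
      simp [map_sub, map_smul, hc]
    have h := hcom _ ha ψ
    rw [sw, L2] at h
    have h1 : ((1:H) ⊗ₜ[ℂ] (a - c • (1:A))) = (1:H) ⊗ₜ[ℂ] a - c • ((1:H) ⊗ₜ[ℂ] (1:A)) := by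
      rw [TensorProduct.tmul_sub, TensorProduct.tmul_smul]
    have hone : ((1:H) ⊗ₜ[ℂ] (1:A)) = (1 : H ⊗[ℂ] A) := rfl
    rw [h1, sub_mul, smul_mul_assoc, hone, one_mul, map_sub, map_smul] at h
    rw [map_sub, map_smul, hρ1, smul_zero, sub_zero] at h
    exact h
  have P : ∀ x : H ⊗[ℂ] A, T (x * F ψ) = T x * ψ +
      (TensorProduct.rid ℂ H (LinearMap.lTensor H (Coalgebra.counit (R := ℂ)) x)) * T (F ψ) := by
    intro x
    induction x using TensorProduct.induction_on with
    | zero => simp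
    | tmul φ' a =>
      have h1 : (φ' ⊗ₜ[ℂ] a) = (φ' ⊗ₜ[ℂ] (1:A)) * ((1:H) ⊗ₜ[ℂ] a) := by
        simp [Algebra.TensorProduct.tmul_mul_tmul]
      have L1' : T (((1:H) ⊗ₜ[ℂ] a) * F ψ) =
          ρ a * ψ + (Coalgebra.counit (R := ℂ) a) • T (F ψ) := by
        rw [L1 a]; abel
      rw [h1, mul_assoc, L0, L1', ← h1]
      have h2 : T (φ' ⊗ₜ[ℂ] a) = φ' * ρ a := by simp [hT]
      rw [h2]
      simp only [LinearMap.lTensor_tmul, TensorProduct.rid_tmul]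
      rw [mul_add, ← mul_assoc, mul_smul_comm, smul_mul_assoc]
    | add x y hx hy => simp only [add_mul, map_add, hx, hy]; abel
  have key := P (F φ)
  rw [(hco.2) φ] at key
  calc sw F ρ (φ * ψ) = T (F (φ * ψ)) := rfl
    _ = T (F φ * F ψ) := by rw [map_mul]
    _ = T (F φ) * ψ + φ * T (F ψ) := key
    _ = sw F ρ φ * ψ + φ * sw F ρ ψ := rfl
end
end

section
/- Let A be a Hopf algebra with counit ε, H a right A-comodule algebra with coaction F, and ρ : A → H a linear map with ρ(1) = 0 satisfying ρ(b)φ = Σ_k φ_k ρ(b c_k) for all b ∈ ker ε and φ ∈ H (where F(φ) = Σ_k φ_k ⊗ c_k), and suppose the coaction F is free (for each a ∈ A there exist qᵢ, bᵢ ∈ H with Σᵢ qᵢ F(bᵢ) = 1 ⊗ a). Then the kernel-subspace R = {a ∈ ker ε : ρ(a) = 0} is a right ideal of A: if b ∈ R and a ∈ A then ba ∈ R. -/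
open TensorProduct

noncomputable section

variable {A H : Type*} [Ring A] [HopfAlgebra ℂ A] [Ring H] [Algebra ℂ H]

/-!  STATEMENT 4: the subspace `R = {a ∈ ker ε : ρ(a) = 0}` is a right ideal of
`A`, for `ρ` satisfying the commutation rule, `ρ(1) = 0`, and `F` free. -/

theorem kernel_is_right_ideal
    (F : H →ₐ[ℂ] H ⊗[ℂ] A) (hco : IsCoaction F) (hfree : IsFree F)
    (ρ : A →ₗ[ℂ] H) (hρ1 : ρ 1 = 0)
    (hcom : ∀ b : A, Coalgebra.counit (R := ℂ) b = 0 → ∀ φ : H,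
      ρ b * φ = sw F (ρ ∘ₗ LinearMap.mulLeft ℂ b) φ) :
    ∀ b : A, Coalgebra.counit (R := ℂ) b = 0 → ρ b = 0 →
      ∀ a : A, Coalgebra.counit (R := ℂ) (b * a) = 0 ∧ ρ (b * a) = 0 := by
  intro b hb hρb a
  have haux : ∀ (g : A →ₗ[ℂ] H) (q : H) (x : H ⊗[ℂ] A),
      LinearMap.mul' ℂ H (LinearMap.lTensor H g ((q ⊗ₜ[ℂ] (1 : A)) * x)) =
        q * LinearMap.mul' ℂ H (LinearMap.lTensor H g x) := by
    intro g q x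
    induction x using TensorProduct.induction_on with
    | zero => simp
    | tmul h c => simp [Algebra.TensorProduct.tmul_mul_tmul, mul_assoc]
    | add x y hx hy => simp [mul_add, hx, hy]
  constructor
  · have : Coalgebra.counit (R := ℂ) (b * a) =
        Coalgebra.counit (R := ℂ) b * Coalgebra.counit (R := ℂ) a := by
      simpa using map_mul (Bialgebra.counitAlgHom ℂ A) b a
    rw [this, hb, zero_mul]
  · obtain ⟨n, q, bb, hqb⟩ := hfree a
    set g : A →ₗ[ℂ] H := ρ ∘ₗ LinearMap.mulLeft ℂ b with hg
    have hzero : ∀ φ : H, LinearMap.mul' ℂ H (LinearMap.lTensor H g (F φ)) = 0 := by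
      intro φ
      have := hcom b hb φ
      rw [hρb, zero_mul] at this
      exact (this.symm : sw F g φ = 0)
    have := congrArg (fun x => LinearMap.mul' ℂ H (LinearMap.lTensor H g x)) hqb
    simp only [map_sum, haux, hzero, mul_zero, Finset.sum_const_zero] at this
    have hrhs : LinearMap.mul' ℂ H (LinearMap.lTensor H g ((1 : H) ⊗ₜ[ℂ] a)) = ρ (b * a) := by
      simp [hg, LinearMap.mul'_apply]
    rw [hrhs] at this
    exact this.symm
end
end

section
/- Let A be a Hopf algebra with coproduct Δ, counit ε, antipode κ, and let ad : A → A ⊗ A denote the right adjoint coaction ad(a) = a⁽²⁾ ⊗ κ(a⁽¹⁾)a⁽³⁾. Let H be a right A-comodule algebra with coaction F, and let ρ : A → H be a linear map satisfying F(ρ(a)) = (ρ ⊗ id)(ad(a)) for all a ∈ A. Then the subspace R = ker ε ∩ ker ρ satisfies ad(R) ⊆ R ⊗ A. -/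
/-!
Applying `ε ⊗ id` to `ad a = a⁽²⁾ ⊗ κ(a⁽¹⁾)a⁽³⁾` gives `κ(a⁽¹⁾)a⁽²⁾ = ε(a)1`, and applying
`ρ ⊗ id` gives `F(ρ a)` by covariance; so for `a ∈ ker ε ∩ ker ρ` both vanish. Over a field
`- ⊗ A` is exact, hence the elements of `A ⊗ A` killed by `ε ⊗ id` and by `ρ ⊗ id` are exactly
those of `(ker ε ∩ ker ρ) ⊗ A`.
-/

open TensorProduct

noncomputable section

variable {A H : Type*} [Ring A] [HopfAlgebra ℂ A] [Ring H] [Algebra ℂ H]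

open LinearMap

section Flat

variable {R M N P Q : Type*} [CommRing R] [AddCommGroup M] [AddCommGroup N] [AddCommGroup P]
  [AddCommGroup Q] [Module R M] [Module R N] [Module R P] [Module R Q] [Module.Flat R N]

theorem mem_range_rTensor_subtype_ker_inf_ker (f : M →ₗ[R] P) (g : M →ₗ[R] Q)
    {t : M ⊗[R] N} (hf : f.rTensor N t = 0) (hg : g.rTensor N t = 0) :
    t ∈ range ((ker f ⊓ ker g).subtype.rTensor N) := by
  rw [← ker_prod]
  refine (Module.Flat.rTensor_exact N (exact_subtype_ker_map (f.prod g)) t).mp ?_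
  have hprod : f.prod g = inl R P Q ∘ₗ f + inr R P Q ∘ₗ g := by ext <;> simp
  rw [hprod, rTensor_add, rTensor_comp, rTensor_comp]
  simp [hf, hg]

end Flat

theorem lTensor_mul'_leftComm_tmul {R B : Type*} [CommSemiring R] [NonUnitalNonAssocSemiring B]
    [Module R B] [SMulCommClass R B B] [IsScalarTower R B B] (c : B) (t : B ⊗[R] B) :
    lTensor B (mul' R B) (TensorProduct.leftComm R B B B (c ⊗ₜ t)) =
      lTensor B (mulLeft R c) t := by
  induction t using TensorProduct.induction_on with
  | zero => simp
  | tmul x y => simp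
  | add x y hx hy => simp only [tmul_add, map_add, hx, hy]

section Hopf

variable {R B : Type*} [CommSemiring R] [Semiring B] [HopfAlgebra R B]

theorem rTensor_counit_lTensor_mul'_leftComm_antipode (t : B ⊗[R] B) :
    rTensor B (Coalgebra.counit (R := R))
        (lTensor B (mul' R B) (TensorProduct.leftComm R B B B
          (rTensor (B ⊗[R] B) (HopfAlgebra.antipode R)
            (lTensor B (Coalgebra.comul (R := R)) t)))) =
      (1 : R) ⊗ₜ mul' R B (rTensor B (HopfAlgebra.antipode R) t) := by
  induction t using TensorProduct.induction_on with
  | zero => simp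
  | tmul x y =>
    rw [lTensor_tmul, rTensor_tmul, lTensor_mul'_leftComm_tmul, ← comp_apply,
      rTensor_comp_lTensor, ← lTensor_comp_rTensor, comp_apply, Coalgebra.rTensor_counit_comul]
    simp
  | add x y hx hy => simp only [map_add, hx, hy, tmul_add]

end Hopf

theorem rTensor_counit_adc (a : A) :
    rTensor A (Coalgebra.counit (R := ℂ)) (adc a) = Coalgebra.counit (R := ℂ) a ⊗ₜ (1 : A) := by
  simp only [adc, coe_comp, Function.comp_apply, LinearEquiv.coe_coe,
    rTensor_counit_lTensor_mul'_leftComm_antipode, HopfAlgebra.mul_antipode_rTensor_comul_apply,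
    Algebra.algebraMap_eq_smul_one, tmul_smul, smul_tmul', smul_eq_mul, mul_one]

theorem kernel_is_ad_invariant_general
    (F : H →ₐ[ℂ] H ⊗[ℂ] A)
    (ρ : A →ₗ[ℂ] H)
    (hcov : ∀ a : A, F (ρ a) = LinearMap.rTensor A ρ (adc a)) :
    ∀ a ∈ (LinearMap.ker (Coalgebra.counit (R := ℂ) (A := A)) ⊓
            LinearMap.ker ρ),
      adc a ∈ LinearMap.range (LinearMap.rTensor A
        (LinearMap.ker (Coalgebra.counit (R := ℂ) (A := A)) ⊓
          LinearMap.ker ρ).subtype) := by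
  rintro a ⟨hε, hρ⟩
  apply mem_range_rTensor_subtype_ker_inf_ker
  · rw [rTensor_counit_adc, mem_ker.mp hε, zero_tmul]
  · rw [← hcov, mem_ker.mp hρ, map_zero]

theorem kernel_is_ad_invariant
    (F : H →ₐ[ℂ] H ⊗[ℂ] A) (hco : IsCoaction F)
    (ρ : A →ₗ[ℂ] H)
    (hcov : ∀ a : A, F (ρ a) = LinearMap.rTensor A ρ (adc a)) :
    ∀ a ∈ (LinearMap.ker (Coalgebra.counit (R := ℂ) (A := A)) ⊓
            LinearMap.ker ρ),
      adc a ∈ LinearMap.range (LinearMap.rTensor A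
        (LinearMap.ker (Coalgebra.counit (R := ℂ) (A := A)) ⊓
          LinearMap.ker ρ).subtype) :=
  kernel_is_ad_invariant_general F ρ hcov
end
end

section
/- Let A be a Hopf algebra, H a right A-comodule algebra with free coaction F (for each a ∈ A there are qᵢ, bᵢ ∈ H with Σᵢ qᵢ F(bᵢ) = 1 ⊗ a). Let D be a degree +1 right-covariant antiderivation and E a degree +1 right-covariant antiderivation, with associated maps ρ_D, χ_E : A → H characterized by D²(φ) = −Σ_k φ_k ρ_D(c_k) and E(φ) = −(−1)^{∂φ} Σ_k φ_k χ_E(c_k) for all homogeneous φ. Then the map ρ_{D+E} characterized by (D+E)²(φ) = −Σ_k φ_k ρ_{D+E}(c_k) satisfies ρ_{D+E}(a) = ρ_D(a) + D(χ_E(a)) + χ_E(a⁽¹⁾)χ_E(a⁽²⁾) for all a ∈ A. -/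
/-! Expanding, `(D + E)² = D² + (DE + ED) + E²`. On `φ` homogeneous of degree `n`, the Leibniz
rule for `D` applied to `E φ = -(-1)ⁿ Σ φ_k χ_E(c_k)` gives `DE φ + ED φ = -Σ φ_k D(χ_E(c_k))`: the
other Leibniz term is cancelled by `ED φ`, where `E` acts with the opposite sign `(-1)ⁿ⁺¹`. Applying
the formula for `E` twice, coassociativity of the coaction turns `E² φ` into
`-Σ φ_k χ_E(c_k⁽¹⁾) χ_E(c_k⁽²⁾)`, the operator of the convolution square `χ_E * χ_E`. So `ρ_{D+E}`
and `ρ_D + D ∘ χ_E + χ_E * χ_E` induce the same operator `φ ↦ Σ φ_k ρ(c_k)`, and freeness of the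
coaction makes `ρ` recoverable from that operator. -/

open TensorProduct

noncomputable section

variable {A H : Type*} [Ring A] [HopfAlgebra ℂ A] [Ring H] [Algebra ℂ H]

open WithConv

def coactMul (ρ : A →ₗ[ℂ] H) : H ⊗[ℂ] A →ₗ[ℂ] H :=
  LinearMap.mul' ℂ H ∘ₗ LinearMap.lTensor H ρ

@[simp]
lemma coactMul_tmul (ρ : A →ₗ[ℂ] H) (h : H) (a : A) : coactMul ρ (h ⊗ₜ a) = h * ρ a := by
  simp [coactMul]

lemma sw_eq_coactMul (F : H →ₐ[ℂ] H ⊗[ℂ] A) (ρ : A →ₗ[ℂ] H) (φ : H) :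
    sw F ρ φ = coactMul ρ (F φ) := rfl

lemma coactMul_tmul_one_mul (ρ : A →ₗ[ℂ] H) (q : H) (x : H ⊗[ℂ] A) :
    coactMul ρ ((q ⊗ₜ 1) * x) = q * coactMul ρ x := by
  induction x using TensorProduct.induction_on with
  | zero => simp
  | tmul h a => simp [Algebra.TensorProduct.tmul_mul_tmul, mul_assoc]
  | add x y hx hy => simp only [mul_add, map_add, hx, hy]

lemma IsFree.sw_injective {F : H →ₐ[ℂ] H ⊗[ℂ] A} (hF : IsFree F) : Function.Injective (sw F) := by
  intro ρ ρ' h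
  ext a
  obtain ⟨n, q, b, hb⟩ := hF a
  have eval : ∀ σ : A →ₗ[ℂ] H, σ a = ∑ i, q i * sw F σ (b i) := fun σ => by
    simp_rw [sw_eq_coactMul, ← coactMul_tmul_one_mul, ← map_sum, hb, coactMul_tmul, one_mul]
  rw [eval, eval, h]

lemma sw_add (F : H →ₐ[ℂ] H ⊗[ℂ] A) (ρ ρ' : A →ₗ[ℂ] H) (φ : H) :
    sw F (ρ + ρ') φ = sw F ρ φ + sw F ρ' φ := by
  simp [sw, LinearMap.lTensor_add]

lemma LinearMap.rTensor_eq_of_eqOn_range {R M N P : Type*} [CommSemiring R]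
    [AddCommMonoid M] [AddCommMonoid N] [AddCommMonoid P] [Module R M] [Module R N] [Module R P]
    {p : Submodule R M} {t : M ⊗[R] P} (ht : t ∈ LinearMap.range (LinearMap.rTensor P p.subtype))
    {f g : M →ₗ[R] N} (hfg : ∀ x ∈ p, f x = g x) :
    LinearMap.rTensor P f t = LinearMap.rTensor P g t := by
  obtain ⟨t, rfl⟩ := ht
  have : f ∘ₗ p.subtype = g ∘ₗ p.subtype := LinearMap.ext fun x => hfg x x.2
  rw [← LinearMap.comp_apply, ← LinearMap.rTensor_comp, this, LinearMap.rTensor_comp,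
    LinearMap.comp_apply]

lemma map_coactMul_of_mem_range {p : Submodule ℂ H} {D : H →ₗ[ℂ] H} {s : ℂ}
    (hD : ∀ h ∈ p, ∀ ψ : H, D (h * ψ) = D h * ψ + s • (h * D ψ)) (χ : A →ₗ[ℂ] H)
    {t : H ⊗[ℂ] A} (ht : t ∈ LinearMap.range (LinearMap.rTensor A p.subtype)) :
    D (coactMul χ t) = coactMul χ (LinearMap.rTensor A D t) + s • coactMul (D ∘ₗ χ) t := by
  obtain ⟨t, rfl⟩ := ht
  induction t using TensorProduct.induction_on with
  | zero => simp
  | tmul h a => simpa using hD h h.2 (χ a)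
  | add x y hx hy =>
    simp only [map_add, hx, hy, smul_add]
    abel

lemma coactMul_rTensor_coactMul {F : H →ₐ[ℂ] H ⊗[ℂ] A} (hF : IsCoaction F)
    (ψ χ : A →ₗ[ℂ] H) (φ : H) :
    coactMul χ (LinearMap.rTensor A (coactMul ψ ∘ₗ F.toLinearMap) (F φ)) =
      sw F (toConv ψ * toConv χ).ofConv φ := by
  rw [LinearMap.rTensor_comp, LinearMap.comp_apply, hF.1 φ, sw_eq_coactMul]
  generalize F φ = x
  induction x using TensorProduct.induction_on with
  | zero => simp
  | tmul h a =>
    simp only [LinearMap.lTensor_tmul, coactMul_tmul, LinearMap.convMul_apply]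
    induction Coalgebra.comul (R := ℂ) a using TensorProduct.induction_on with
    | zero => simp
    | tmul a₁ a₂ => simp [mul_assoc]
    | add u v hu hv => simp only [TensorProduct.tmul_add, map_add, hu, hv, mul_add]
  | add x y hx hy => simp only [map_add, hx, hy]

lemma neg_one_zpow_mul_self {K : Type*} [DivisionRing K] (n : ℤ) :
    (-1 : K) ^ n * (-1 : K) ^ n = 1 := by
  rw [← zpow_add₀ (neg_ne_zero.mpr one_ne_zero), Even.neg_one_zpow ⟨n, rfl⟩]

section Graded

variable {𝒜 : ℤ → Submodule ℂ H}

lemma leibniz_of_mem_left [DirectSum.Decomposition 𝒜] {D : H →ₗ[ℂ] H}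
    (hD : ∀ (n m : ℤ) (φ ψ : H), φ ∈ 𝒜 n → ψ ∈ 𝒜 m →
      D (φ * ψ) = D φ * ψ + ((-1 : ℂ) ^ n) • (φ * D ψ))
    {n : ℤ} {φ : H} (hφ : φ ∈ 𝒜 n) (ψ : H) :
    D (φ * ψ) = D φ * ψ + ((-1 : ℂ) ^ n) • (φ * D ψ) := by
  induction ψ using DirectSum.Decomposition.inductionOn 𝒜 with
  | zero => simp
  | homogeneous ψ => exact hD n _ φ ψ hφ ψ.2
  | add x y hx hy =>
    simp only [mul_add, map_add, hx, hy, smul_add]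
    abel

lemma apply_covariant_apply_of_mem {F : H →ₐ[ℂ] H ⊗[ℂ] A} {E T : H →ₗ[ℂ] H} {χ : A →ₗ[ℂ] H}
    (hχ : ∀ (n : ℤ), ∀ φ ∈ 𝒜 n, E φ = - (((-1 : ℂ) ^ n) • sw F χ φ))
    {n : ℤ} {φ : H} (hTφ : T φ ∈ 𝒜 (n + 1)) (hT : F (T φ) = LinearMap.rTensor A T (F φ)) :
    E (T φ) = ((-1 : ℂ) ^ n) • coactMul χ (LinearMap.rTensor A T (F φ)) := by
  rw [hχ _ _ hTφ, sw_eq_coactMul, hT, zpow_add_one₀ (neg_ne_zero.mpr one_ne_zero)]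
  simp

lemma anticommutator_apply_of_mem [DirectSum.Decomposition 𝒜] {F : H →ₐ[ℂ] H ⊗[ℂ] A}
    {D E : H →ₗ[ℂ] H} {χ : A →ₗ[ℂ] H}
    (hD : ∀ (n m : ℤ) (φ ψ : H), φ ∈ 𝒜 n → ψ ∈ 𝒜 m →
      D (φ * ψ) = D φ * ψ + ((-1 : ℂ) ^ n) • (φ * D ψ))
    (hχ : ∀ (n : ℤ), ∀ φ ∈ 𝒜 n, E φ = - (((-1 : ℂ) ^ n) • sw F χ φ))
    {n : ℤ} {φ : H} (hφ : φ ∈ 𝒜 n)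
    (hFφ : F φ ∈ LinearMap.range (LinearMap.rTensor A (𝒜 n).subtype))
    (hDφ : D φ ∈ 𝒜 (n + 1)) (hDcov : F (D φ) = LinearMap.rTensor A D (F φ)) :
    D (E φ) + E (D φ) = - sw F (D ∘ₗ χ) φ := by
  rw [hχ n φ hφ, apply_covariant_apply_of_mem hχ hDφ hDcov, sw_eq_coactMul, sw_eq_coactMul,
    map_neg, map_smul, map_coactMul_of_mem_range (fun h hh => leibniz_of_mem_left hD hh) χ hFφ,
    smul_add, smul_smul, neg_one_zpow_mul_self, one_smul]
  abel

lemma sq_apply_of_mem {F : H →ₐ[ℂ] H ⊗[ℂ] A} (hF : IsCoaction F) {E : H →ₗ[ℂ] H}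
    {χ : A →ₗ[ℂ] H} (hχ : ∀ (n : ℤ), ∀ φ ∈ 𝒜 n, E φ = - (((-1 : ℂ) ^ n) • sw F χ φ))
    {n : ℤ} {φ : H} (hFφ : F φ ∈ LinearMap.range (LinearMap.rTensor A (𝒜 n).subtype))
    (hEφ : E φ ∈ 𝒜 (n + 1)) (hEcov : F (E φ) = LinearMap.rTensor A E (F φ)) :
    E (E φ) = - sw F (toConv χ * toConv χ).ofConv φ := by
  have hE : ∀ ψ ∈ 𝒜 n, E ψ = (-((-1 : ℂ) ^ n) • (coactMul χ ∘ₗ F.toLinearMap)) ψ := fun ψ hψ => by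
    simp [hχ n ψ hψ, sw_eq_coactMul]
  rw [apply_covariant_apply_of_mem hχ hEφ hEcov, LinearMap.rTensor_eq_of_eqOn_range hFφ hE,
    LinearMap.rTensor_smul A, LinearMap.smul_apply, map_smul, coactMul_rTensor_coactMul hF,
    smul_smul, mul_neg, neg_one_zpow_mul_self, neg_one_smul]

end Graded

theorem curvature_of_shifted_preconnection_general
    (𝒜 : ℤ → Submodule ℂ H) [GradedAlgebra 𝒜]
    (F : H →ₐ[ℂ] H ⊗[ℂ] A) (hco : IsCoaction F) (hfree : IsFree F)
    (hFgr : ∀ (n : ℤ), ∀ φ ∈ 𝒜 n,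
      F φ ∈ LinearMap.range (LinearMap.rTensor A (𝒜 n).subtype))
    (D E : H →ₗ[ℂ] H)
    (hDdeg : ∀ (n : ℤ), ∀ φ ∈ 𝒜 n, D φ ∈ 𝒜 (n + 1))
    (hEdeg : ∀ (n : ℤ), ∀ φ ∈ 𝒜 n, E φ ∈ 𝒜 (n + 1))
    (hDcov : ∀ φ : H, F (D φ) = LinearMap.rTensor A D (F φ))
    (hEcov : ∀ φ : H, F (E φ) = LinearMap.rTensor A E (F φ))
    (hDleib : ∀ (n m : ℤ) (φ ψ : H), φ ∈ 𝒜 n → ψ ∈ 𝒜 m →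
      D (φ * ψ) = D φ * ψ + ((-1 : ℂ) ^ n) • (φ * D ψ))
    (ρD χE ρDE : A →ₗ[ℂ] H)
    (hρD : ∀ φ : H, D (D φ) = - sw F ρD φ)
    (hχE : ∀ (n : ℤ), ∀ φ ∈ 𝒜 n, E φ = - (((-1 : ℂ) ^ n) • sw F χE φ))
    (hρDE : ∀ φ : H, (D + E) ((D + E) φ) = - sw F ρDE φ) :
    ∀ a : A, ρDE a = ρD a + D (χE a) +
      LinearMap.mul' ℂ H (TensorProduct.map χE χE (Coalgebra.comul (R := ℂ) a)) := by
  have h_homogeneous : ∀ n, ∀ φ ∈ 𝒜 n,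
      sw F ρDE φ = sw F (ρD + D ∘ₗ χE + (toConv χE * toConv χE).ofConv) φ := by
    intro n φ hφ
    have hsq : (D + E) ((D + E) φ) = D (D φ) + (D (E φ) + E (D φ)) + E (E φ) := by
      simp only [LinearMap.add_apply, map_add]
      abel
    rw [← neg_inj, ← hρDE, hsq, hρD,
      anticommutator_apply_of_mem hDleib hχE hφ (hFgr n φ hφ) (hDdeg n φ hφ) (hDcov φ),
      sq_apply_of_mem hco hχE (hFgr n φ hφ) (hEdeg n φ hφ) (hEcov φ), sw_add, sw_add]
    abel
  have hρ : ρDE = ρD + D ∘ₗ χE + (toConv χE * toConv χE).ofConv := by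
    refine hfree.sw_injective (funext fun φ => ?_)
    induction φ using DirectSum.Decomposition.inductionOn 𝒜 with
    | zero => simp [sw]
    | homogeneous φ => exact h_homogeneous _ φ φ.2
    | add φ ψ hφ hψ =>
      simp only [sw_eq_coactMul, map_add] at hφ hψ ⊢
      rw [hφ, hψ]
  intro a
  rw [hρ]
  rfl

theorem curvature_of_shifted_preconnection
    (𝒜 : ℤ → Submodule ℂ H) [GradedAlgebra 𝒜]
    (F : H →ₐ[ℂ] H ⊗[ℂ] A) (hco : IsCoaction F) (hfree : IsFree F)
    (hFgr : ∀ (n : ℤ), ∀ φ ∈ 𝒜 n,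
      F φ ∈ LinearMap.range (LinearMap.rTensor A (𝒜 n).subtype))
    (D E : H →ₗ[ℂ] H)
    (hDdeg : ∀ (n : ℤ), ∀ φ ∈ 𝒜 n, D φ ∈ 𝒜 (n + 1))
    (hEdeg : ∀ (n : ℤ), ∀ φ ∈ 𝒜 n, E φ ∈ 𝒜 (n + 1))
    (hDcov : ∀ φ : H, F (D φ) = LinearMap.rTensor A D (F φ))
    (hEcov : ∀ φ : H, F (E φ) = LinearMap.rTensor A E (F φ))
    (hDleib : ∀ (n m : ℤ) (φ ψ : H), φ ∈ 𝒜 n → ψ ∈ 𝒜 m →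
      D (φ * ψ) = D φ * ψ + ((-1 : ℂ) ^ n) • (φ * D ψ))
    (hEleib : ∀ (n m : ℤ) (φ ψ : H), φ ∈ 𝒜 n → ψ ∈ 𝒜 m →
      E (φ * ψ) = E φ * ψ + ((-1 : ℂ) ^ n) • (φ * E ψ))
    (ρD χE ρDE : A →ₗ[ℂ] H)
    (hρD : ∀ φ : H, D (D φ) = - sw F ρD φ)
    (hχE : ∀ (n : ℤ), ∀ φ ∈ 𝒜 n, E φ = - (((-1 : ℂ) ^ n) • sw F χE φ))
    (hρDE : ∀ φ : H, (D + E) ((D + E) φ) = - sw F ρDE φ) :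
    ∀ a : A, ρDE a = ρD a + D (χE a) +
      LinearMap.mul' ℂ H (TensorProduct.map χE χE (Coalgebra.comul (R := ℂ) a)) :=
  curvature_of_shifted_preconnection_general 𝒜 F hco hfree hFgr D E hDdeg hEdeg hDcov hEcov hDleib
    ρD χE ρDE hρD hχE hρDE
end
end

section
/- Let A be a Hopf *-algebra, H a graded *-algebra that is also a right A-comodule algebra with free coaction F, and let Δ : H → H be an even derivation with associated map ρ : A → H satisfying Δ(φ) = Σ_k φ_k ρ(c_k), ρ(1) = 0, and the commutation rule ρ(a)φ = Σ_k φ_k ρ(a c_k) for a ∈ ker ε. Then Δ is hermitian (Δ(φ*) = Δ(φ)* for all φ) if and only if ρ(κ(a)*) = −ρ(a)* for all a ∈ A. -/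
open TensorProduct

noncomputable section

variable {A H : Type*} [Ring A] [HopfAlgebra ℂ A] [Ring H] [Algebra ℂ H]

/-! Auxiliary lemmas -/

lemma exists_rep (t : H ⊗[ℂ] A) :
    ∃ (n : ℕ) (x : Fin n → H) (c : Fin n → A), t = ∑ i, x i ⊗ₜ[ℂ] c i := by
  induction t using TensorProduct.induction_on with
  | zero => exact ⟨0, ![], ![], by simp⟩
  | tmul h a => exact ⟨1, fun _ => h, fun _ => a, by simp⟩
  | add s t hs ht =>
      obtain ⟨n, x, c, rfl⟩ := hs
      obtain ⟨m, y, d, rfl⟩ := ht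
      exact ⟨n + m, Fin.append x y, Fin.append c d, by
        rw [Fin.sum_univ_add]; simp⟩

lemma sw_rep (F : H →ₐ[ℂ] H ⊗[ℂ] A) (μ : A →ₗ[ℂ] H) {φ : H} {n : ℕ}
    {x : Fin n → H} {c : Fin n → A} (h : F φ = ∑ i, x i ⊗ₜ[ℂ] c i) :
    sw F μ φ = ∑ i, x i * μ (c i) := by
  simp [sw, h, map_sum]

lemma sw_neg (F : H →ₐ[ℂ] H ⊗[ℂ] A) (μ : A →ₗ[ℂ] H) (φ : H) :
    sw F (-μ) φ = - sw F μ φ := by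
  simp [sw]

lemma sw_smul_sum (F : H →ₐ[ℂ] H ⊗[ℂ] A) (μ : A →ₗ[ℂ] H) {n : ℕ}
    (r : Fin n → ℂ) (x : Fin n → H) :
    sw F μ (∑ i, r i • x i) = ∑ i, r i • sw F μ (x i) := by
  simp [sw, map_sum, map_smul]

lemma counit_rep {F : H →ₐ[ℂ] H ⊗[ℂ] A} (hco : IsCoaction F)
    {φ : H} {n : ℕ} {x : Fin n → H} {c : Fin n → A}
    (h : F φ = ∑ i, x i ⊗ₜ[ℂ] c i) :
    ∑ i, Coalgebra.counit (R := ℂ) (c i) • x i = φ := by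
  have := hco.2 φ
  rw [h] at this
  simpa [map_sum] using this

lemma sw_ext {F : H →ₐ[ℂ] H ⊗[ℂ] A} (hfree : IsFree F) {μ ν : A →ₗ[ℂ] H}
    (h : ∀ φ, sw F μ φ = sw F ν φ) (a : A) : μ a = ν a := by
  obtain ⟨n, q, b, hab⟩ := hfree a
  have key : ∀ (μ : A →ₗ[ℂ] H) (p : H) (t : H ⊗[ℂ] A),
      LinearMap.mul' ℂ H (LinearMap.lTensor H μ ((p ⊗ₜ[ℂ] (1:A)) * t)) =
      p * LinearMap.mul' ℂ H (LinearMap.lTensor H μ t) := by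
    intro μ p t
    induction t using TensorProduct.induction_on with
    | zero => simp
    | tmul g a => simp [Algebra.TensorProduct.tmul_mul_tmul, mul_assoc]
    | add s t hs ht => simp [mul_add, hs, ht]
  have h1 : ∀ (μ : A →ₗ[ℂ] H), μ a = ∑ i, q i * sw F μ (b i) := by
    intro μ
    calc μ a = LinearMap.mul' ℂ H (LinearMap.lTensor H μ ((1:H) ⊗ₜ[ℂ] a)) := by simp
    _ = ∑ i, LinearMap.mul' ℂ H (LinearMap.lTensor H μ ((q i ⊗ₜ[ℂ] (1:A)) * F (b i))) := by
        rw [← hab]; rw [map_sum, map_sum]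
    _ = ∑ i, q i * sw F μ (b i) := by
        refine Finset.sum_congr rfl fun i _ => ?_
        rw [key]; rfl
  rw [h1 μ, h1 ν]
  exact Finset.sum_congr rfl fun i _ => by rw [h]

section Star

variable [StarRing A] [StarModule ℂ A] [StarRing H] [StarModule ℂ H]

/-- The conjugated map `c ↦ (ρ(c*))*`. -/
def rho' (ρ : A →ₗ[ℂ] H) : A →ₗ[ℂ] H where
  toFun c := star (ρ (star c))
  map_add' x y := by simp
  map_smul' r x := by simp [star_smul]

lemma rho'_one {ρ : A →ₗ[ℂ] H} (hρ1 : ρ 1 = 0) : rho' ρ 1 = 0 := by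
  show star (ρ (star (1:A))) = 0
  rw [star_one, hρ1, star_zero]

/-- the auxiliary linear map `y ⊗ (d ⊗ v) ↦ ρ'((d * κ(v)) * c) * y`. -/
def gmap (ρ : A →ₗ[ℂ] H) (c : A) : H ⊗[ℂ] (A ⊗[ℂ] A) →ₗ[ℂ] H :=
  (LinearMap.mul' ℂ H) ∘ₗ (TensorProduct.comm ℂ H H).toLinearMap ∘ₗ
    LinearMap.lTensor H ((rho' ρ) ∘ₗ (LinearMap.mulRight ℂ c) ∘ₗ (LinearMap.mul' ℂ A)
      ∘ₗ (LinearMap.lTensor A (HopfAlgebra.antipode (R := ℂ))))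

@[simp] lemma gmap_tmul (ρ : A →ₗ[ℂ] H) (c : A) (y : H) (d v : A) :
    gmap ρ c (y ⊗ₜ[ℂ] (d ⊗ₜ[ℂ] v)) =
      rho' ρ ((d * HopfAlgebra.antipode (R := ℂ) v) * c) * y := by
  simp [gmap]

def gmap2 (ρ : A →ₗ[ℂ] H) (c : A) : (H ⊗[ℂ] A) ⊗[ℂ] A →ₗ[ℂ] H :=
  gmap ρ c ∘ₗ (TensorProduct.assoc ℂ H A A).toLinearMap

@[simp] lemma gmap2_tmul (ρ : A →ₗ[ℂ] H) (c : A) (y : H) (d v : A) :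
    gmap2 ρ c ((y ⊗ₜ[ℂ] d) ⊗ₜ[ℂ] v) =
      rho' ρ ((d * HopfAlgebra.antipode (R := ℂ) v) * c) * y := by
  simp [gmap2]

lemma gmap2_symm (ρ : A →ₗ[ℂ] H) (c : A) (t : H ⊗[ℂ] (A ⊗[ℂ] A)) :
    gmap2 ρ c ((TensorProduct.assoc ℂ H A A).symm t) = gmap ρ c t := by
  simp [gmap2]

/-- the auxiliary linear map `y ⊗ (v ⊗ c) ↦ y * ρ'(κ(v) * c)`. -/
def hmap (ρ : A →ₗ[ℂ] H) : H ⊗[ℂ] (A ⊗[ℂ] A) →ₗ[ℂ] H :=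
  (LinearMap.mul' ℂ H) ∘ₗ
    LinearMap.lTensor H ((rho' ρ) ∘ₗ (LinearMap.mul' ℂ A)
      ∘ₗ (LinearMap.rTensor A (HopfAlgebra.antipode (R := ℂ))))

@[simp] lemma hmap_tmul (ρ : A →ₗ[ℂ] H) (y : H) (v c : A) :
    hmap ρ (y ⊗ₜ[ℂ] (v ⊗ₜ[ℂ] c)) =
      y * rho' ρ (HopfAlgebra.antipode (R := ℂ) v * c) := by
  simp [hmap]

def hmap2 (ρ : A →ₗ[ℂ] H) : (H ⊗[ℂ] A) ⊗[ℂ] A →ₗ[ℂ] H :=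
  hmap ρ ∘ₗ (TensorProduct.assoc ℂ H A A).toLinearMap

@[simp] lemma hmap2_tmul (ρ : A →ₗ[ℂ] H) (y : H) (v c : A) :
    hmap2 ρ ((y ⊗ₜ[ℂ] v) ⊗ₜ[ℂ] c) =
      y * rho' ρ (HopfAlgebra.antipode (R := ℂ) v * c) := by
  simp [hmap2]

lemma hmap2_symm (ρ : A →ₗ[ℂ] H) (t : H ⊗[ℂ] (A ⊗[ℂ] A)) :
    hmap2 ρ ((TensorProduct.assoc ℂ H A A).symm t) = hmap ρ t := by
  simp [hmap2]

lemma dagger_comm {F : H →ₐ[ℂ] H ⊗[ℂ] A}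
    (hεstar : ∀ a : A, Coalgebra.counit (R := ℂ) (star a) =
      starRingEnd ℂ (Coalgebra.counit (R := ℂ) a))
    (hFstar : ∀ (φ : H) (n : ℕ) (x : Fin n → H) (c : Fin n → A),
      F φ = ∑ i, x i ⊗ₜ[ℂ] c i →
      F (star φ) = ∑ i, star (x i) ⊗ₜ[ℂ] star (c i))
    {ρ : A →ₗ[ℂ] H}
    (hcom : ∀ b : A, Coalgebra.counit (R := ℂ) b = 0 → ∀ φ : H,
      ρ b * φ = sw F (ρ ∘ₗ LinearMap.mulLeft ℂ b) φ)
    {c : A} (hc : Coalgebra.counit (R := ℂ) c = 0) {ψ : H} {n : ℕ}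
    {x : Fin n → H} {d : Fin n → A} (hrep : F ψ = ∑ i, x i ⊗ₜ[ℂ] d i) :
    ψ * rho' ρ c = ∑ i, rho' ρ (d i * c) * x i := by
  have hc' : Coalgebra.counit (R := ℂ) (star c) = 0 := by rw [hεstar, hc]; simp
  have h1 := hcom (star c) hc' (star ψ)
  rw [sw_rep F _ (hFstar ψ n x d hrep)] at h1
  have h2 := congrArg star h1
  rw [star_mul, star_star, star_sum] at h2
  show ψ * star (ρ (star c)) = _
  rw [h2]
  refine Finset.sum_congr rfl fun i _ => ?_
  show _ = star (ρ (star (d i * c))) * x i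
  rw [star_mul, star_star]
  congr 1
  rw [star_mul]
  rfl

lemma dagger_move {F : H →ₐ[ℂ] H ⊗[ℂ] A} (hco : IsCoaction F)
    (hεstar : ∀ a : A, Coalgebra.counit (R := ℂ) (star a) =
      starRingEnd ℂ (Coalgebra.counit (R := ℂ) a))
    (hFstar : ∀ (φ : H) (n : ℕ) (x : Fin n → H) (c : Fin n → A),
      F φ = ∑ i, x i ⊗ₜ[ℂ] c i →
      F (star φ) = ∑ i, star (x i) ⊗ₜ[ℂ] star (c i))
    {ρ : A →ₗ[ℂ] H}
    (hcom : ∀ b : A, Coalgebra.counit (R := ℂ) b = 0 → ∀ φ : H,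
      ρ b * φ = sw F (ρ ∘ₗ LinearMap.mulLeft ℂ b) φ)
    {c : A} (hc : Coalgebra.counit (R := ℂ) c = 0) {x : H} {n : ℕ}
    {u : Fin n → H} {v : Fin n → A} (hrep : F x = ∑ k, u k ⊗ₜ[ℂ] v k) :
    rho' ρ c * x = ∑ k, u k * rho' ρ (HopfAlgebra.antipode (R := ℂ) (v k) * c) := by
  choose m y d hud using fun k => exists_rep (F (u k))
  have step1 : ∀ k, u k * rho' ρ (HopfAlgebra.antipode (R := ℂ) (v k) * c)
      = ∑ j, rho' ρ (d k j * (HopfAlgebra.antipode (R := ℂ) (v k) * c)) * y k j := by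
    intro k
    exact dagger_comm hεstar hFstar hcom
      (by rw [Bialgebra.counit_mul, hc, mul_zero]) (hud k)
  have happ := congrArg (gmap2 ρ c) (hco.1 x)
  have lhs_eq : gmap2 ρ c (LinearMap.rTensor A F.toLinearMap (F x))
      = ∑ k, u k * rho' ρ (HopfAlgebra.antipode (R := ℂ) (v k) * c) := by
    rw [hrep, map_sum, map_sum]
    refine Finset.sum_congr rfl fun k _ => ?_
    rw [LinearMap.rTensor_tmul]
    show gmap2 ρ c ((F (u k)) ⊗ₜ[ℂ] v k) = _
    rw [hud k, step1 k, TensorProduct.sum_tmul, map_sum]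
    refine Finset.sum_congr rfl fun j _ => ?_
    rw [gmap2_tmul, mul_assoc]
  have rhs_eq : gmap2 ρ c ((TensorProduct.assoc ℂ H A A).symm
        (LinearMap.lTensor H (Coalgebra.comul (R := ℂ)) (F x)))
      = rho' ρ c * x := by
    rw [gmap2_symm, hrep, map_sum, map_sum]
    have key : ∀ k, gmap ρ c (LinearMap.lTensor H (Coalgebra.comul (R := ℂ)) (u k ⊗ₜ[ℂ] v k))
        = Coalgebra.counit (R := ℂ) (v k) • (rho' ρ c * u k) := by
      intro k
      simp only [LinearMap.lTensor_tmul, gmap, LinearMap.comp_apply,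
        HopfAlgebra.mul_antipode_lTensor_comul_apply, LinearMap.mulRight_apply,
        TensorProduct.comm_tmul, LinearMap.mul'_apply, LinearEquiv.coe_coe,
        map_smul, Algebra.algebraMap_eq_smul_one, smul_mul_assoc, one_mul]
    rw [Finset.sum_congr rfl fun k _ => key k]
    calc ∑ k, Coalgebra.counit (R := ℂ) (v k) • (rho' ρ c * u k)
        = rho' ρ c * ∑ k, Coalgebra.counit (R := ℂ) (v k) • u k := by
          rw [Finset.mul_sum]
          exact Finset.sum_congr rfl fun k _ => (mul_smul_comm _ _ _).symm
      _ = rho' ρ c * x := by rw [counit_rep hco hrep]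
  rw [lhs_eq, rhs_eq] at happ
  exact happ.symm

/-- The key identity: `(Δ(φ*))* = sw F (-(ρ' ∘ κ)) φ`. -/
lemma dagger_eq {F : H →ₐ[ℂ] H ⊗[ℂ] A} (hco : IsCoaction F)
    (hεstar : ∀ a : A, Coalgebra.counit (R := ℂ) (star a) =
      starRingEnd ℂ (Coalgebra.counit (R := ℂ) a))
    (hFstar : ∀ (φ : H) (n : ℕ) (x : Fin n → H) (c : Fin n → A),
      F φ = ∑ i, x i ⊗ₜ[ℂ] c i →
      F (star φ) = ∑ i, star (x i) ⊗ₜ[ℂ] star (c i))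
    {ρ : A →ₗ[ℂ] H} (hρ1 : ρ 1 = 0)
    (hcom : ∀ b : A, Coalgebra.counit (R := ℂ) b = 0 → ∀ φ : H,
      ρ b * φ = sw F (ρ ∘ₗ LinearMap.mulLeft ℂ b) φ)
    (ψ : H) :
    star (sw F ρ (star ψ)) =
      sw F (-(rho' ρ ∘ₗ HopfAlgebra.antipode (R := ℂ))) ψ := by
  obtain ⟨n, x, c, hrep⟩ := exists_rep (F ψ)
  have hrep' := hFstar ψ n x c hrep
  have hρ'1 : rho' ρ 1 = 0 := rho'_one hρ1
  have lhs : star (sw F ρ (star ψ)) = ∑ i, rho' ρ (c i) * x i := by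
    rw [sw_rep F ρ hrep', star_sum]
    refine Finset.sum_congr rfl fun i _ => ?_
    rw [star_mul, star_star]
    rfl
  choose m u v huv using fun i => exists_rep (F (x i))
  have hbar : ∀ i, Coalgebra.counit (R := ℂ)
      (c i - Coalgebra.counit (R := ℂ) (c i) • 1) = 0 := by
    intro i
    rw [map_sub, map_smul, Bialgebra.counit_one, smul_eq_mul, mul_one, sub_self]
  have step : ∀ i, rho' ρ (c i) * x i
      = (∑ k, u i k * rho' ρ (HopfAlgebra.antipode (R := ℂ) (v i k) * c i))
        - Coalgebra.counit (R := ℂ) (c i) •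
          (∑ k, u i k * rho' ρ (HopfAlgebra.antipode (R := ℂ) (v i k))) := by
    intro i
    have h1 : rho' ρ (c i) * x i
        = rho' ρ (c i - Coalgebra.counit (R := ℂ) (c i) • 1) * x i := by
      rw [map_sub, map_smul, hρ'1, smul_zero, sub_zero]
    rw [h1, dagger_move hco hεstar hFstar hcom (hbar i) (huv i)]
    rw [Finset.smul_sum, ← Finset.sum_sub_distrib]
    refine Finset.sum_congr rfl fun k _ => ?_
    rw [mul_sub, mul_smul_comm, map_sub, map_smul, mul_one, mul_sub,
      mul_smul_comm]
  have term1 : ∑ i, ∑ k, u i k * rho' ρ (HopfAlgebra.antipode (R := ℂ) (v i k) * c i)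
      = 0 := by
    have happ := congrArg (hmap2 ρ) (hco.1 ψ)
    have lhs_eq : hmap2 ρ (LinearMap.rTensor A F.toLinearMap (F ψ))
        = ∑ i, ∑ k, u i k * rho' ρ (HopfAlgebra.antipode (R := ℂ) (v i k) * c i) := by
      rw [hrep, map_sum, map_sum]
      refine Finset.sum_congr rfl fun i _ => ?_
      rw [LinearMap.rTensor_tmul]
      show hmap2 ρ ((F (x i)) ⊗ₜ[ℂ] c i) = _
      rw [huv i, TensorProduct.sum_tmul, map_sum]
      exact Finset.sum_congr rfl fun k _ => hmap2_tmul ρ _ _ _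
    have rhs_eq : hmap2 ρ ((TensorProduct.assoc ℂ H A A).symm
          (LinearMap.lTensor H (Coalgebra.comul (R := ℂ)) (F ψ)))
        = 0 := by
      rw [hmap2_symm, hrep, map_sum, map_sum]
      refine Finset.sum_eq_zero fun i _ => ?_
      simp only [LinearMap.lTensor_tmul, hmap, LinearMap.comp_apply,
        HopfAlgebra.mul_antipode_rTensor_comul_apply,
        Algebra.algebraMap_eq_smul_one, map_smul, hρ'1, smul_zero,
        TensorProduct.tmul_zero, map_zero]
    rw [lhs_eq, rhs_eq] at happ
    exact happ
  have term2 : ∑ i, Coalgebra.counit (R := ℂ) (c i) •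
        (∑ k, u i k * rho' ρ (HopfAlgebra.antipode (R := ℂ) (v i k)))
      = sw F (rho' ρ ∘ₗ HopfAlgebra.antipode (R := ℂ)) ψ := by
    have h2 : ∀ i, ∑ k, u i k * rho' ρ (HopfAlgebra.antipode (R := ℂ) (v i k))
        = sw F (rho' ρ ∘ₗ HopfAlgebra.antipode (R := ℂ)) (x i) := by
      intro i
      rw [sw_rep F _ (huv i)]
      rfl
    rw [Finset.sum_congr rfl fun i _ => by rw [h2 i]]
    rw [← sw_smul_sum, counit_rep hco hrep]
  rw [lhs, Finset.sum_congr rfl fun i _ => step i, Finset.sum_sub_distrib,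
    term1, term2, zero_sub, sw_neg]

end Star

/-!  STATEMENT 11 -/

theorem hermitian_iff_rho_star
    [StarRing A] [StarModule ℂ A] [StarRing H] [StarModule ℂ H]
    (𝒜 : ℤ → Submodule ℂ H) [GradedAlgebra 𝒜]
    (hstar𝒜 : ∀ (n : ℤ), ∀ φ ∈ 𝒜 n, star φ ∈ 𝒜 n)
    -- Hopf *-algebra axioms
    (hinv : ∀ a : A, star (HopfAlgebra.antipode (R := ℂ)
      (star (HopfAlgebra.antipode (R := ℂ) a))) = a)
    (hεstar : ∀ a : A, Coalgebra.counit (R := ℂ) (star a) =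
      starRingEnd ℂ (Coalgebra.counit (R := ℂ) a))
    (hcomulstar : ∀ (a : A) (n : ℕ) (x y : Fin n → A),
      Coalgebra.comul (R := ℂ) a = ∑ i, x i ⊗ₜ[ℂ] y i →
      Coalgebra.comul (R := ℂ) (star a) = ∑ i, star (x i) ⊗ₜ[ℂ] star (y i))
    (F : H →ₐ[ℂ] H ⊗[ℂ] A) (hco : IsCoaction F) (hfree : IsFree F)
    -- the coaction is a *-homomorphism
    (hFstar : ∀ (φ : H) (n : ℕ) (x : Fin n → H) (c : Fin n → A),
      F φ = ∑ i, x i ⊗ₜ[ℂ] c i →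
      F (star φ) = ∑ i, star (x i) ⊗ₜ[ℂ] star (c i))
    -- grade preservation of the coaction
    (hFgr : ∀ (n : ℤ), ∀ φ ∈ 𝒜 n,
      F φ ∈ LinearMap.range (LinearMap.rTensor A (𝒜 n).subtype))
    (ρ : A →ₗ[ℂ] H) (hρ1 : ρ 1 = 0)
    (hcom : ∀ b : A, Coalgebra.counit (R := ℂ) b = 0 → ∀ φ : H,
      ρ b * φ = sw F (ρ ∘ₗ LinearMap.mulLeft ℂ b) φ)
    -- `Δ = sw F ρ` is an even derivation
    (heven : ∀ (n : ℤ), ∀ φ ∈ 𝒜 n, sw F ρ φ ∈ 𝒜 n)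
    (hder : ∀ φ ψ : H, sw F ρ (φ * ψ) = sw F ρ φ * ψ + φ * sw F ρ ψ) :
    (∀ φ : H, sw F ρ (star φ) = star (sw F ρ φ)) ↔
      (∀ a : A, ρ (star (HopfAlgebra.antipode (R := ℂ) a)) = - star (ρ a)) := by
  have key : ∀ ψ : H, star (sw F ρ (star ψ)) =
      sw F (-(rho' ρ ∘ₗ HopfAlgebra.antipode (R := ℂ))) ψ :=
    dagger_eq hco hεstar hFstar hρ1 hcom
  constructor
  · intro herm a
    have hall : ∀ φ : H, sw F ρ φ = sw F (-(rho' ρ ∘ₗ HopfAlgebra.antipode (R := ℂ))) φ := by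
      intro φ
      rw [← key φ, herm φ, star_star]
    have := sw_ext hfree hall a
    -- this : ρ a = - star (ρ (star (antipode a)))
    have h' : ρ a = - star (ρ (star (HopfAlgebra.antipode (R := ℂ) a))) := this
    have := congrArg star h'
    rw [star_neg, star_star] at this
    -- this : star (ρ a) = - ρ (star (antipode a))
    rw [eq_neg_iff_add_eq_zero] at this ⊢
    rw [add_comm]
    exact this
  · intro hrho φ
    have hlam : (-(rho' ρ ∘ₗ HopfAlgebra.antipode (R := ℂ))) = ρ := by
      apply LinearMap.ext
      intro b
      show -(star (ρ (star (HopfAlgebra.antipode (R := ℂ) b)))) = ρ b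
      rw [hrho b, star_neg, star_star, neg_neg]
    have := key φ
    rw [hlam] at this
    rw [← this, star_star]
end
end

section
/- Let V be a ℂ-vector space and σ : V ⊗ V → V ⊗ V a linear map satisfying the braid relation (σ⊗id)(id⊗σ)(σ⊗id) = (id⊗σ)(σ⊗id)(id⊗σ) on V^{⊗3}. For n ≥ 0 define the antisymmetrizer A_n = Σ_{π ∈ S_n} (−1)^π σ_π on V^{⊗n}, where σ_π is the operator obtained from a reduced word for π by replacing each adjacent transposition s_i with the σ-twist acting in slots i, i+1 (well-defined by the braid relation). For k, l ≥ 0 define the shuffle sum A_{k,l} = Σ_{π ∈ S_{k,l}} (−1)^π σ_{π^{-1}}, where S_{k,l} ⊆ S_{k+l} is the set of (k,l)-shuffles. Then A_{k+l} = (A_k ⊗ A_l) ∘ A_{k,l} on V^{⊗(k+l)}. -/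
/-!
Every `γ ∈ S_{k+l}` factors uniquely as `γ = (α × β) * π⁻¹` with `α × β` in the Young subgroup
`S_k × S_l` and `π` a `(k,l)`-shuffle: `π` enumerates `γ⁻¹ {0,…,k-1}` and its complement in
increasing order. The factorization is length-additive, because every inversion of `π⁻¹` goes
across the two blocks, which `α × β` preserves. Concatenating reduced words shows that `σ_π` is
multiplicative along length-additive products and that `σ_{α × β} = σ_α ⊗ σ_β`, so expanding
`(A_k ⊗ A_l) ∘ A_{k,l}` gives exactly the sum defining `A_{k+l}`.
-/

open TensorProduct

noncomputable section

/-- The adjacent transposition `s_i` in `S_n` (the identity if out of range). -/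
def aswap (n i : ℕ) : Equiv.Perm (Fin n) :=
  if h : i + 1 < n then Equiv.swap ⟨i, Nat.lt_of_succ_lt h⟩ ⟨i + 1, h⟩ else 1

/-- The number of inversions of a permutation (its Coxeter length). -/
def invCount {n : ℕ} (π : Equiv.Perm (Fin n)) : ℕ :=
  (Finset.univ.filter (fun p : Fin n × Fin n => p.1 < p.2 ∧ π p.2 < π p.1)).card

/-- The total antisymmetrizer `A_n = Σ_{π ∈ S_n} (-1)^π σ_π`. -/
def Aop {T : ℕ → Type*} [∀ n, AddCommGroup (T n)] [∀ n, Module ℂ (T n)]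
    (σop : ∀ n, Equiv.Perm (Fin n) → Module.End ℂ (T n)) (n : ℕ) :
    Module.End ℂ (T n) :=
  ∑ π : Equiv.Perm (Fin n), (((Equiv.Perm.sign π : ℤ) : ℂ)) • σop n π

/-- The set of `(k,l)`-shuffles in `S_{k+l}`: permutations preserving the
relative order of `{0,…,k-1}` and of `{k,…,k+l-1}`. -/
def shuffles (k l : ℕ) : Finset (Equiv.Perm (Fin (k + l))) :=
  Finset.univ.filter (fun π => ∀ i j : Fin (k + l), i < j →
    ((j : ℕ) < k ∨ k ≤ (i : ℕ)) → π i < π j)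

/-- The shuffle sum `A_{k,l} = Σ_{π ∈ S_{k,l}} (-1)^π σ_{π⁻¹}`. -/
def Ash {T : ℕ → Type*} [∀ n, AddCommGroup (T n)] [∀ n, Module ℂ (T n)]
    (σop : ∀ n, Equiv.Perm (Fin n) → Module.End ℂ (T n)) (k l : ℕ) :
    Module.End ℂ (T (k + l)) :=
  ∑ π ∈ shuffles k l, (((Equiv.Perm.sign π : ℤ) : ℂ)) • σop (k + l) π⁻¹

open Equiv Finset

section Inversions

variable {n : ℕ}

def inversions (π : Perm (Fin n)) : Finset (Fin n × Fin n) :=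
  {p | p.1 < p.2 ∧ π p.2 < π p.1}

@[simp]
lemma mem_inversions {π : Perm (Fin n)} {p : Fin n × Fin n} :
    p ∈ inversions π ↔ p.1 < p.2 ∧ π p.2 < π p.1 := by
  simp [inversions]

lemma card_inversions (π : Perm (Fin n)) : #(inversions π) = invCount π := rfl

lemma invCount_one : invCount (1 : Perm (Fin n)) = 0 := by
  rw [← card_inversions, card_eq_zero, eq_empty_iff_forall_notMem]
  simp only [mem_inversions, Perm.one_apply, not_and, not_lt]
  exact fun _ h => h.le

/-- The inversions of `f * g` are then those of `g` together with the `g`-preimages of those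
of `f`. -/
lemma invCount_mul_of_inversions_subset {f g : Perm (Fin n)}
    (h : inversions g ⊆ inversions (f * g)) :
    invCount (f * g) = invCount f + invCount g := by
  rw [← card_inversions, ← card_inversions f, ← card_inversions g,
    ← card_sdiff_add_card_eq_card h]
  congr 1
  refine card_nbij' (fun p => (g p.1, g p.2)) (fun q => (g⁻¹ q.1, g⁻¹ q.2)) ?_ ?_ ?_ ?_
  · rintro ⟨a, b⟩ hp
    simp only [coe_sdiff, Set.mem_sdiff, mem_coe, mem_inversions, Perm.mul_apply, not_and,
      not_lt] at hp ⊢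
    exact ⟨lt_of_le_of_ne (hp.2 hp.1.1) (g.injective.ne hp.1.1.ne), hp.1.2⟩
  · rintro ⟨a, b⟩ hq
    simp only [mem_coe, mem_inversions] at hq
    have hab : g⁻¹ a < g⁻¹ b := by
      refine lt_of_le_of_ne (not_lt.1 fun hba => ?_) (g⁻¹.injective.ne hq.1.ne)
      have := h (show (g⁻¹ b, g⁻¹ a) ∈ inversions g by simpa using ⟨hba, hq.1⟩)
      simp only [mem_inversions, Perm.mul_apply, Perm.coe_inv, apply_symm_apply] at this
      exact lt_asymm this.2 hq.2
    simp only [coe_sdiff, Set.mem_sdiff, mem_coe, mem_inversions, Perm.mul_apply,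
      Perm.coe_inv, apply_symm_apply, not_and, not_lt]
    exact ⟨⟨hab, hq.2⟩, fun _ => hq.1.le⟩
  · intro p _; simp
  · intro q _; simp

lemma aswap_mul_self (n i : ℕ) : aswap n i * aswap n i = 1 := by
  unfold aswap
  split_ifs <;> simp

lemma inversions_aswap {i : ℕ} (hi : i + 1 < n) :
    inversions (aswap n i) = {(⟨i, by omega⟩, ⟨i + 1, hi⟩)} := by
  ext ⟨⟨a, ha⟩, ⟨b, hb⟩⟩
  simp only [aswap, dif_pos hi, mem_inversions, mem_singleton, Prod.mk.injEq, swap_apply_def,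
    Fin.mk_lt_mk, Fin.mk.injEq]
  split_ifs <;> simp only [Fin.mk_lt_mk] at * <;> omega

lemma invCount_eq_succ_of_descent {i : ℕ} (hi : i + 1 < n) {π : Perm (Fin n)}
    (hdesc : π ⟨i + 1, hi⟩ < π ⟨i, by omega⟩) :
    invCount π = invCount (π * aswap n i) + 1 := by
  have h := invCount_mul_of_inversions_subset (f := π * aswap n i) (g := aswap n i) (by
    rw [mul_assoc, aswap_mul_self, mul_one, inversions_aswap hi, singleton_subset_iff]
    simp [Fin.lt_def, hdesc])
  rwa [mul_assoc, aswap_mul_self, mul_one, ← card_inversions (aswap n i),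
    inversions_aswap hi, card_singleton] at h

lemma Equiv.Perm.eq_one_of_strictMono {α : Type*} [LinearOrder α] [WellFoundedLT α]
    {π : Perm α} (h : StrictMono π) : π = 1 := by
  have := (h.range_inj strictMono_id).1 (by simp)
  exact Equiv.ext (congrFun this)

lemma exists_descent_of_ne_one {π : Perm (Fin n)} (hπ : π ≠ 1) :
    ∃ i, ∃ hi : i + 1 < n, π ⟨i + 1, hi⟩ < π ⟨i, by omega⟩ := by
  contrapose! hπ
  obtain _ | n := n
  · exact Subsingleton.elim _ _
  refine Perm.eq_one_of_strictMono (Fin.strictMono_iff_lt_succ.2 fun i => ?_)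
  exact lt_of_le_of_ne (hπ i (by omega)) (π.injective.ne (by simp [Fin.ext_iff]))

lemma exists_reduced_word (π : Perm (Fin n)) :
    ∃ w : List ℕ, (∀ i ∈ w, i + 1 < n) ∧ (w.map (aswap n)).prod = π ∧
      w.length = invCount π := by
  induction hm : invCount π using Nat.strong_induction_on generalizing π with
  | _ m ih =>
  by_cases hπ : π = 1
  · subst hπ
    exact ⟨[], by simp, by simp, by simp [← hm, invCount_one]⟩
  obtain ⟨i, hi, hdesc⟩ := exists_descent_of_ne_one hπ
  have hlen := invCount_eq_succ_of_descent hi hdesc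
  obtain ⟨w, hw, hprod, hwlen⟩ := ih _ (by omega) (π * aswap n i) rfl
  refine ⟨w ++ [i], ?_, ?_, by simp [hwlen, hlen, ← hm]⟩
  · simpa [or_imp, forall_and] using ⟨hw, hi⟩
  · simp [hprod, mul_assoc, aswap_mul_self]

end Inversions

section Blocks

variable {k l : ℕ}

@[simp]
lemma Fin.castAdd_lt_natAdd (i : Fin k) (j : Fin l) : Fin.castAdd l i < Fin.natAdd k j := by
  simp only [Fin.lt_def, Fin.val_castAdd, Fin.val_natAdd]
  omega

@[simp]
lemma Fin.castAdd_ne_natAdd (i : Fin k) (j : Fin l) : Fin.castAdd l i ≠ Fin.natAdd k j :=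
  (Fin.castAdd_lt_natAdd i j).ne

@[simp]
lemma Fin.natAdd_ne_castAdd (i : Fin k) (j : Fin l) : Fin.natAdd k j ≠ Fin.castAdd l i :=
  (Fin.castAdd_lt_natAdd i j).ne'

def blockPerm (k l : ℕ) : Perm (Fin k) × Perm (Fin l) →* Perm (Fin (k + l)) :=
  finSumFinEquiv.permCongrHom.toMonoidHom.comp (Perm.sumCongrHom (Fin k) (Fin l))

@[simp]
lemma blockPerm_apply_castAdd (x : Perm (Fin k) × Perm (Fin l)) (i : Fin k) :
    blockPerm k l x (Fin.castAdd l i) = Fin.castAdd l (x.1 i) := by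
  simp [blockPerm, permCongrHom, permCongr_apply]

@[simp]
lemma blockPerm_apply_natAdd (x : Perm (Fin k) × Perm (Fin l)) (i : Fin l) :
    blockPerm k l x (Fin.natAdd k i) = Fin.natAdd k (x.2 i) := by
  simp [blockPerm, permCongrHom, permCongr_apply]

lemma blockPerm_injective : Function.Injective (blockPerm k l) :=
  finSumFinEquiv.permCongrHom.injective.comp Perm.sumCongrHom_injective

lemma sign_blockPerm (x : Perm (Fin k) × Perm (Fin l)) :
    Perm.sign (blockPerm k l x) = Perm.sign x.1 * Perm.sign x.2 := by
  simp [blockPerm, permCongrHom, Perm.sign_permCongr, Perm.sign_sumCongr]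

lemma exists_blockPerm_eq {b : Perm (Fin (k + l))}
    (hb : ∀ i : Fin k, ∃ j : Fin k, b (Fin.castAdd l i) = Fin.castAdd l j) :
    ∃ x, blockPerm k l x = b := by
  obtain ⟨x, hx⟩ := Perm.mem_sumCongrHom_range_of_perm_mapsTo_inl
    (σ := finSumFinEquiv.symm.permCongr b) (by
      rintro _ ⟨i, rfl⟩
      obtain ⟨j, hj⟩ := hb i
      exact ⟨j, by simp [permCongr_apply, hj]⟩)
  refine ⟨x, Equiv.ext fun y => ?_⟩
  simp [blockPerm, permCongrHom, hx, permCongr_apply]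

lemma blockPerm_val_lt_iff (x : Perm (Fin k) × Perm (Fin l)) (y : Fin (k + l)) :
    (blockPerm k l x y : ℕ) < k ↔ (y : ℕ) < k := by
  induction y using Fin.addCases <;> simp

lemma blockPerm_aswap_left {i : ℕ} (hi : i + 1 < k) :
    blockPerm k l (aswap k i, 1) = aswap (k + l) i := by
  simp [blockPerm, permCongrHom, permCongr_def, aswap, hi, show i + 1 < k + l by omega]

lemma blockPerm_aswap_right {i : ℕ} (hi : i + 1 < l) :
    blockPerm k l (1, aswap l i) = aswap (k + l) (k + i) := by
  simp [blockPerm, permCongrHom, permCongr_def, aswap, hi, Fin.natAdd_mk, add_assoc]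

lemma blockPerm_prod_aswap_left {w : List ℕ} (hw : ∀ i ∈ w, i + 1 < k) :
    blockPerm k l ((w.map (aswap k)).prod, 1) = (w.map (aswap (k + l))).prod := by
  rw [← MonoidHom.inl_apply, ← MonoidHom.comp_apply, map_list_prod, List.map_map]
  exact congrArg List.prod (List.map_congr_left fun i hi => blockPerm_aswap_left (hw i hi))

lemma blockPerm_prod_aswap_right {w : List ℕ} (hw : ∀ i ∈ w, i + 1 < l) :
    blockPerm k l (1, (w.map (aswap l)).prod) = (w.map (aswap (k + l) ∘ (k + ·))).prod := by
  rw [← MonoidHom.inr_apply, ← MonoidHom.comp_apply, map_list_prod, List.map_map]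
  exact congrArg List.prod (List.map_congr_left fun i hi => blockPerm_aswap_right (hw i hi))

lemma invCount_blockPerm (x : Perm (Fin k) × Perm (Fin l)) :
    invCount (blockPerm k l x) = invCount x.1 + invCount x.2 := by
  have : inversions (blockPerm k l x) =
      ((inversions x.1).map ((Fin.castAddEmb l).prodMap (Fin.castAddEmb l))).disjUnion
        ((inversions x.2).map ((Fin.natAddEmb k).prodMap (Fin.natAddEmb k))) (by
          simp only [disjoint_left, mem_map]
          rintro _ ⟨p, -, rfl⟩ ⟨q, -, h⟩
          exact Fin.natAdd_ne_castAdd _ _ (congrArg Prod.fst h)) := by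
    ext ⟨a, b⟩
    induction a using Fin.addCases <;> induction b using Fin.addCases <;>
      simp [(Fin.castAdd_lt_natAdd _ _).not_gt, (Fin.strictMono_castAdd l).lt_iff_lt]
  rw [← card_inversions, this, card_disjUnion, card_map, card_map, card_inversions,
    card_inversions]

end Blocks

section Shuffles

lemma StrictMono.eq_of_comp_eq_comp {α β γ : Type*} [LinearOrder α] [WellFoundedLT α]
    [Preorder β] {f g : α → β} (hf : StrictMono f) (hg : StrictMono g) {u v : γ → α}
    (hu : u.Surjective) (hv : v.Surjective) (h : f ∘ u = g ∘ v) : f = g :=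
  (hf.range_inj hg).1 (by rw [← hu.range_comp, ← hv.range_comp, h])

variable {k l : ℕ}

lemma mem_shuffles_iff {π : Perm (Fin (k + l))} :
    π ∈ shuffles k l ↔ StrictMono (π ∘ Fin.castAdd l) ∧ StrictMono (π ∘ Fin.natAdd k) := by
  simp only [shuffles, mem_filter, mem_univ, true_and]
  refine ⟨fun h => ⟨fun i j hij => h _ _ (Fin.strictMono_castAdd l hij) (by simp),
    fun i j hij => h _ _ (Fin.strictMono_natAdd k hij) (by simp)⟩, ?_⟩
  rintro ⟨hL, hR⟩ i j hij hblock
  induction i using Fin.addCases <;> induction j using Fin.addCases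
  · exact hL ((Fin.strictMono_castAdd l).lt_iff_lt.1 hij)
  · simp only [Fin.val_natAdd, Fin.val_castAdd] at hblock
    omega
  · exact absurd hij (Fin.castAdd_lt_natAdd _ _).not_gt
  · exact hR ((Fin.strictMono_natAdd k).lt_iff_lt.1 hij)

lemma invCount_blockPerm_mul_inv {π : Perm (Fin (k + l))} (hπ : π ∈ shuffles k l)
    (x : Perm (Fin k) × Perm (Fin l)) :
    invCount (blockPerm k l x * π⁻¹) = invCount (blockPerm k l x) + invCount π⁻¹ := by
  refine invCount_mul_of_inversions_subset fun ⟨a, b⟩ hab => ?_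
  simp only [mem_inversions, Perm.mul_apply] at hab ⊢
  have hcross : (π⁻¹ b : ℕ) < k ∧ k ≤ (π⁻¹ a : ℕ) := by
    by_contra hsame
    have := (mem_filter.1 hπ).2 _ _ hab.2 (by omega)
    simp only [Perm.coe_inv, apply_symm_apply] at this
    exact lt_asymm this hab.1
  refine ⟨hab.1, ?_⟩
  have hb := (blockPerm_val_lt_iff x (π⁻¹ b)).2 hcross.1
  have ha := (blockPerm_val_lt_iff x (π⁻¹ a)).not.2 (by omega)
  rw [Fin.lt_def]
  omega

/-- A shuffle is determined by the images of its two blocks, and these are constant along a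
coset of `S_k × S_l`. -/
lemma eq_of_mul_blockPerm_eq {π π' : Perm (Fin (k + l))} (hπ : π ∈ shuffles k l)
    (hπ' : π' ∈ shuffles k l) {x x' : Perm (Fin k) × Perm (Fin l)}
    (h : π * blockPerm k l x = π' * blockPerm k l x') : π = π' := by
  rw [mem_shuffles_iff] at hπ hπ'
  have hL : π ∘ Fin.castAdd l = π' ∘ Fin.castAdd l :=
    hπ.1.eq_of_comp_eq_comp hπ'.1 x.1.surjective x'.1.surjective <| funext fun i => by
      simpa using congrArg (· (Fin.castAdd l i)) h
  have hR : π ∘ Fin.natAdd k = π' ∘ Fin.natAdd k :=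
    hπ.2.eq_of_comp_eq_comp hπ'.2 x.2.surjective x'.2.surjective <| funext fun i => by
      simpa using congrArg (· (Fin.natAdd k i)) h
  ext y
  induction y using Fin.addCases
  · exact congrArg Fin.val (congrFun hL _)
  · exact congrArg Fin.val (congrFun hR _)

lemma exists_blockPerm_mul_inv_eq (γ : Perm (Fin (k + l))) :
    ∃ x, ∃ π ∈ shuffles k l, blockPerm k l x * π⁻¹ = γ := by
  set S := (univ.map (Fin.castAddEmb l)).map γ.symm.toEmbedding
  have hS : #S = k := by simp [S]
  have hSc : #Sᶜ = l := by rw [card_compl, hS, Fintype.card_fin]; omega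
  set π : Perm (Fin (k + l)) := finSumFinEquiv.symm.trans (finSumEquivOfFinset hS hSc)
  have hπL : π ∘ Fin.castAdd l = S.orderEmbOfFin hS := funext fun i => by
    simp [π, finSumEquivOfFinset_inl]
  have hπR : π ∘ Fin.natAdd k = Sᶜ.orderEmbOfFin hSc := funext fun i => by
    simp [π, finSumEquivOfFinset_inr]
  have hπ : π ∈ shuffles k l := by
    rw [mem_shuffles_iff, hπL, hπR]
    exact ⟨(S.orderEmbOfFin hS).strictMono, (Sᶜ.orderEmbOfFin hSc).strictMono⟩
  obtain ⟨x, hx⟩ := exists_blockPerm_eq (b := γ * π) fun i => by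
    have hmem : π (Fin.castAdd l i) ∈ S := by
      rw [← Function.comp_apply (f := π), hπL]
      exact S.orderEmbOfFin_mem hS i
    simp only [S, mem_map, mem_univ, true_and] at hmem
    obtain ⟨_, ⟨j, rfl⟩, hj⟩ := hmem
    exact ⟨j, by simp [← hj]⟩
  exact ⟨x, π, hπ, by rw [hx, mul_inv_cancel_right]⟩

lemma sum_perm_eq_sum_blockPerm_mul_inv {M : Type*} [AddCommMonoid M]
    (f : Perm (Fin (k + l)) → M) :
    ∑ γ, f γ = ∑ x, ∑ π ∈ shuffles k l, f (blockPerm k l x * π⁻¹) := by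
  rw [← sum_product']
  symm
  refine sum_nbij (fun z => blockPerm k l z.1 * z.2⁻¹) (fun _ _ => mem_univ _) ?_ ?_ ?_
  · rintro ⟨x, π⟩ hπ ⟨x', π'⟩ hπ' h
    simp only [coe_product, coe_univ, Set.mem_prod, Set.mem_univ, true_and, mem_coe] at hπ hπ' h
    have hinv : π * blockPerm k l x⁻¹ = π' * blockPerm k l x'⁻¹ := by
      simpa [mul_inv_rev] using congrArg (·⁻¹) h
    obtain rfl := eq_of_mul_blockPerm_eq hπ hπ' hinv
    rw [blockPerm_injective (mul_right_cancel h)]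
  · intro γ _
    obtain ⟨x, π, hπ, h⟩ := exists_blockPerm_mul_inv_eq γ
    exact ⟨(x, π), by simpa using hπ, h⟩
  · intros
    rfl

end Shuffles

section Twists

variable {T : ℕ → Type*} [∀ n, AddCommGroup (T n)] [∀ n, Module ℂ (T n)]
  (e : ∀ k l, (T k ⊗[ℂ] T l) ≃ₗ[ℂ] T (k + l)) (tw : ∀ n : ℕ, ℕ → Module.End ℂ (T n))
  (σop : ∀ n, Perm (Fin n) → Module.End ℂ (T n))

lemma prod_tw_left_apply
    (htwL : ∀ k l i : ℕ, i + 2 ≤ k → ∀ x : T k ⊗[ℂ] T l,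
      tw (k + l) i (e k l x) = e k l (LinearMap.rTensor (T l) (tw k i) x))
    {k l : ℕ} {w : List ℕ} (hw : ∀ i ∈ w, i + 1 < k) (x : T k ⊗[ℂ] T l) :
    (w.map (tw (k + l))).prod (e k l x) =
      e k l (LinearMap.rTensor (T l) (w.map (tw k)).prod x) := by
  induction w generalizing x with
  | nil => simp [Module.End.one_eq_id]
  | cons i w ih =>
    simp only [List.forall_mem_cons] at hw
    simp only [List.map_cons, List.prod_cons, ih hw.2,
      htwL k l i (by omega), Module.End.mul_eq_comp, LinearMap.rTensor_comp, LinearMap.comp_apply]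

lemma prod_tw_right_apply
    (htwR : ∀ k l i : ℕ, ∀ x : T k ⊗[ℂ] T l,
      tw (k + l) (k + i) (e k l x) = e k l (LinearMap.lTensor (T k) (tw l i) x))
    {k l : ℕ} (w : List ℕ) (x : T k ⊗[ℂ] T l) :
    (w.map (tw (k + l) ∘ (k + ·))).prod (e k l x) =
      e k l (LinearMap.lTensor (T k) (w.map (tw l)).prod x) := by
  induction w generalizing x with
  | nil => simp [Module.End.one_eq_id]
  | cons i w ih =>
    simp only [List.map_cons, List.prod_cons, Function.comp_apply, ih,
      htwR, Module.End.mul_eq_comp, LinearMap.lTensor_comp, LinearMap.comp_apply]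

lemma σop_mul_of_invCount_add
    (hσop : ∀ (n : ℕ) (π : Perm (Fin n)) (w : List ℕ),
      (w.map (aswap n)).prod = π → w.length = invCount π → σop n π = (w.map (tw n)).prod)
    {n : ℕ} {f g : Perm (Fin n)} (h : invCount (f * g) = invCount f + invCount g) :
    σop n (f * g) = σop n f * σop n g := by
  obtain ⟨u, -, hu, hul⟩ := exists_reduced_word f
  obtain ⟨v, -, hv, hvl⟩ := exists_reduced_word g
  rw [hσop n f u hu hul, hσop n g v hv hvl, ← List.prod_append, ← List.map_append,
    hσop n (f * g) (u ++ v) (by simp [hu, hv]) (by simp [h, hul, hvl])]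

lemma σop_blockPerm_apply
    (htwL : ∀ k l i : ℕ, i + 2 ≤ k → ∀ x : T k ⊗[ℂ] T l,
      tw (k + l) i (e k l x) = e k l (LinearMap.rTensor (T l) (tw k i) x))
    (htwR : ∀ k l i : ℕ, ∀ x : T k ⊗[ℂ] T l,
      tw (k + l) (k + i) (e k l x) = e k l (LinearMap.lTensor (T k) (tw l i) x))
    (hσop : ∀ (n : ℕ) (π : Perm (Fin n)) (w : List ℕ),
      (w.map (aswap n)).prod = π → w.length = invCount π → σop n π = (w.map (tw n)).prod)
    {k l : ℕ} (x : Perm (Fin k) × Perm (Fin l)) (t : T k ⊗[ℂ] T l) :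
    σop (k + l) (blockPerm k l x) (e k l t) =
      e k l (TensorProduct.map (σop k x.1) (σop l x.2) t) := by
  obtain ⟨u, hu, hprod_u, hlen_u⟩ := exists_reduced_word x.1
  obtain ⟨v, hv, hprod_v, hlen_v⟩ := exists_reduced_word x.2
  have hprod : ((u ++ v.map (k + ·)).map (aswap (k + l))).prod = blockPerm k l x := by
    rw [List.map_append, List.prod_append, List.map_map, ← blockPerm_prod_aswap_left hu,
      ← blockPerm_prod_aswap_right hv, ← map_mul, hprod_u, hprod_v, Prod.mk_mul_mk, mul_one,
      one_mul]
  have hlen : (u ++ v.map (k + ·)).length = invCount (blockPerm k l x) := by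
    simp [invCount_blockPerm, hlen_u, hlen_v]
  rw [hσop _ _ _ hprod hlen, hσop k _ u hprod_u hlen_u, hσop l _ v hprod_v hlen_v,
    List.map_append, List.prod_append, Module.End.mul_apply, List.map_map,
    prod_tw_right_apply e tw htwR, prod_tw_left_apply e tw htwL hu, ← LinearMap.comp_apply,
    LinearMap.rTensor_comp_lTensor]

lemma conj_map_Aop
    (htwL : ∀ k l i : ℕ, i + 2 ≤ k → ∀ x : T k ⊗[ℂ] T l,
      tw (k + l) i (e k l x) = e k l (LinearMap.rTensor (T l) (tw k i) x))
    (htwR : ∀ k l i : ℕ, ∀ x : T k ⊗[ℂ] T l,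
      tw (k + l) (k + i) (e k l x) = e k l (LinearMap.lTensor (T k) (tw l i) x))
    (hσop : ∀ (n : ℕ) (π : Perm (Fin n)) (w : List ℕ),
      (w.map (aswap n)).prod = π → w.length = invCount π → σop n π = (w.map (tw n)).prod)
    (k l : ℕ) :
    (e k l).toLinearMap ∘ₗ TensorProduct.map (Aop σop k) (Aop σop l) ∘ₗ
        (e k l).symm.toLinearMap =
      ∑ x, ((Perm.sign (blockPerm k l x) : ℤ) : ℂ) • σop (k + l) (blockPerm k l x) := by
  refine LinearMap.ext fun y => ?_
  obtain ⟨t, rfl⟩ := (e k l).surjective y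
  simp only [LinearMap.comp_apply, LinearEquiv.coe_coe, LinearEquiv.symm_apply_apply,
    LinearMap.sum_apply, LinearMap.smul_apply, σop_blockPerm_apply e tw σop htwL htwR hσop,
    sign_blockPerm, Units.val_mul, Int.cast_mul, ← map_smul, ← map_sum]
  congr 1
  simp only [Aop, ← TensorProduct.mapBilinear_apply, map_sum, map_smul, LinearMap.sum_apply,
    LinearMap.smul_apply, Fintype.sum_prod_type, Finset.smul_sum, smul_smul]
  rw [sum_comm]
  exact sum_congr rfl fun _ _ => sum_congr rfl fun _ _ => by rw [mul_comm]

end Twists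

theorem antisymmetrizer_factorization_general
    (T : ℕ → Type*) [∀ n, AddCommGroup (T n)] [∀ n, Module ℂ (T n)]
    (e : ∀ k l, (T k ⊗[ℂ] T l) ≃ₗ[ℂ] T (k + l))
    -- the σ-twists acting in slots i, i+1 of T n
    (tw : ∀ n : ℕ, ℕ → Module.End ℂ (T n))
    (htwL : ∀ k l i : ℕ, i + 2 ≤ k → ∀ x : T k ⊗[ℂ] T l,
      tw (k + l) i (e k l x) = e k l (LinearMap.rTensor (T l) (tw k i) x))
    (htwR : ∀ k l i : ℕ, ∀ x : T k ⊗[ℂ] T l,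
      tw (k + l) (k + i) (e k l x) = e k l (LinearMap.lTensor (T k) (tw l i) x))
    -- the operators σ_π, well-defined via reduced words
    (σop : ∀ n, Equiv.Perm (Fin n) → Module.End ℂ (T n))
    (hσop : ∀ (n : ℕ) (π : Equiv.Perm (Fin n)) (w : List ℕ),
      (w.map (aswap n)).prod = π → w.length = invCount π →
      σop n π = (w.map (tw n)).prod) :
    ∀ k l : ℕ,
      Aop σop (k + l) =
        (e k l).toLinearMap ∘ₗ
          (TensorProduct.map (Aop σop k) (Aop σop l)) ∘ₗ
          (e k l).symm.toLinearMap ∘ₗ (Ash σop k l) := by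
  intro k l
  set sgn : ∀ {n}, Perm (Fin n) → ℂ := fun π => ((Perm.sign π : ℤ) : ℂ)
  calc Aop σop (k + l)
      = ∑ x, ∑ π ∈ shuffles k l,
          sgn (blockPerm k l x * π⁻¹) • σop (k + l) (blockPerm k l x * π⁻¹) :=
        sum_perm_eq_sum_blockPerm_mul_inv _
    _ = ∑ x, ∑ π ∈ shuffles k l, (sgn (blockPerm k l x) • σop (k + l) (blockPerm k l x)) *
          (sgn π • σop (k + l) π⁻¹) := by
        refine sum_congr rfl fun x _ => sum_congr rfl fun π hπ => ?_
        rw [σop_mul_of_invCount_add tw σop hσop (invCount_blockPerm_mul_inv hπ x),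
          smul_mul_smul_comm]
        simp [sgn, Perm.sign_inv]
    _ = (∑ x, sgn (blockPerm k l x) • σop (k + l) (blockPerm k l x)) * Ash σop k l := by
        rw [Ash, sum_mul]
        simp only [mul_sum]
        rfl
    _ = _ := by
        rw [← conj_map_Aop e tw σop htwL htwR hσop]
        rfl

theorem antisymmetrizer_factorization
    {V : Type*} [AddCommGroup V] [Module ℂ V]
    (T : ℕ → Type*) [∀ n, AddCommGroup (T n)] [∀ n, Module ℂ (T n)]
    (e1 : T 1 ≃ₗ[ℂ] V)
    (e : ∀ k l, (T k ⊗[ℂ] T l) ≃ₗ[ℂ] T (k + l))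
    (σ : (V ⊗[ℂ] V) →ₗ[ℂ] (V ⊗[ℂ] V))
    -- the braid relation for σ on (V ⊗ V) ⊗ V
    (hbraid :
      (LinearMap.rTensor V σ) ∘ₗ
        ((TensorProduct.assoc ℂ V V V).symm.toLinearMap ∘ₗ
          (LinearMap.lTensor V σ) ∘ₗ (TensorProduct.assoc ℂ V V V).toLinearMap) ∘ₗ
        (LinearMap.rTensor V σ) =
      ((TensorProduct.assoc ℂ V V V).symm.toLinearMap ∘ₗ
          (LinearMap.lTensor V σ) ∘ₗ (TensorProduct.assoc ℂ V V V).toLinearMap) ∘ₗ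
        (LinearMap.rTensor V σ) ∘ₗ
        ((TensorProduct.assoc ℂ V V V).symm.toLinearMap ∘ₗ
          (LinearMap.lTensor V σ) ∘ₗ (TensorProduct.assoc ℂ V V V).toLinearMap))
    -- the σ-twists acting in slots i, i+1 of T n
    (tw : ∀ n : ℕ, ℕ → Module.End ℂ (T n))
    (htw2 : tw 2 0 = (e 1 1).toLinearMap ∘ₗ
      (TensorProduct.map e1.symm.toLinearMap e1.symm.toLinearMap) ∘ₗ σ ∘ₗ
      (TensorProduct.map e1.toLinearMap e1.toLinearMap) ∘ₗ (e 1 1).symm.toLinearMap)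
    (htwL : ∀ k l i : ℕ, i + 2 ≤ k → ∀ x : T k ⊗[ℂ] T l,
      tw (k + l) i (e k l x) = e k l (LinearMap.rTensor (T l) (tw k i) x))
    (htwR : ∀ k l i : ℕ, ∀ x : T k ⊗[ℂ] T l,
      tw (k + l) (k + i) (e k l x) = e k l (LinearMap.lTensor (T k) (tw l i) x))
    -- the operators σ_π, well-defined via reduced words
    (σop : ∀ n, Equiv.Perm (Fin n) → Module.End ℂ (T n))
    (hσop : ∀ (n : ℕ) (π : Equiv.Perm (Fin n)) (w : List ℕ),
      (w.map (aswap n)).prod = π → w.length = invCount π →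
      σop n π = (w.map (tw n)).prod) :
    ∀ k l : ℕ,
      Aop σop (k + l) =
        (e k l).toLinearMap ∘ₗ
          (TensorProduct.map (Aop σop k) (Aop σop l)) ∘ₗ
          (e k l).symm.toLinearMap ∘ₗ (Ash σop k l) :=
  antisymmetrizer_factorization_general T e tw htwL htwR σop hσop
end
end

section
/- Let A be a Hopf algebra with bijective antipode κ, let Γ_inv be a right A-module (action denoted ϑ ∘ a) carrying a right A-coaction ϖ(ϑ) = Σ_k ϑ_k ⊗ c_k compatible in the sense that ϖ(ϑ ∘ a) = Σ_k ϑ_k ∘ a⁽²⁾ ⊗ κ(a⁽¹⁾) c_k a⁽³⁾. Define σ : Γ_inv ⊗ Γ_inv → Γ_inv ⊗ Γ_inv by σ(η ⊗ ϑ) = Σ_k ϑ_k ⊗ (η ∘ c_k). Then σ satisfies the braid relation (σ⊗id)(id⊗σ)(σ⊗id) = (id⊗σ)(σ⊗id)(id⊗σ) on Γ_inv^{⊗3}. -/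
open TensorProduct
noncomputable section



private lemma fin_rep {M N : Type*} [AddCommGroup M] [Module ℂ M]
    [AddCommGroup N] [Module ℂ N] (t : M ⊗[ℂ] N) :
    ∃ (n : ℕ) (x : Fin n → M) (y : Fin n → N), t = ∑ i, x i ⊗ₜ[ℂ] y i := by
  induction t with
  | zero => exact ⟨0, ![], ![], by simp⟩
  | tmul x y => exact ⟨1, ![x], ![y], by simp⟩
  | add a b ha hb =>
    obtain ⟨n, x, y, rfl⟩ := ha
    obtain ⟨m, x', y', rfl⟩ := hb
    refine ⟨n + m, Fin.append x x', Fin.append y y', ?_⟩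
    rw [Fin.sum_univ_add]
    simp [Fin.append_left, Fin.append_right]

private lemma fin_rep3 {M N P : Type*} [AddCommGroup M] [Module ℂ M]
    [AddCommGroup N] [Module ℂ N] [AddCommGroup P] [Module ℂ P]
    (t : M ⊗[ℂ] (N ⊗[ℂ] P)) :
    ∃ (m : ℕ) (a1 : Fin m → M) (a2 : Fin m → N) (a3 : Fin m → P),
      t = ∑ j, a1 j ⊗ₜ[ℂ] (a2 j ⊗ₜ[ℂ] a3 j) := by
  induction t with
  | zero => exact ⟨0, ![], ![], ![], by simp⟩
  | tmul x w =>
    obtain ⟨n, y, z, rfl⟩ := fin_rep w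
    exact ⟨n, fun _ => x, y, z, by rw [tmul_sum]⟩
  | add a b ha hb =>
    obtain ⟨n, x1, x2, x3, rfl⟩ := ha
    obtain ⟨m, y1, y2, y3, rfl⟩ := hb
    refine ⟨n + m, Fin.append x1 y1, Fin.append x2 y2, Fin.append x3 y3, ?_⟩
    rw [Fin.sum_univ_add]
    simp [Fin.append_left, Fin.append_right]


private lemma collapse {A : Type*} [Ring A] [HopfAlgebra ℂ A] :
    ((LinearMap.rTensor (A ⊗[ℂ] A)
        (LinearMap.mul' ℂ A ∘ₗ LinearMap.lTensor A (HopfAlgebra.antipode (R := ℂ)))) ∘ₗ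
      (TensorProduct.assoc ℂ A A (A ⊗[ℂ] A)).symm.toLinearMap ∘ₗ
      (LinearMap.lTensor A
        (LinearMap.lTensor A (Coalgebra.comul (R := ℂ)) ∘ₗ Coalgebra.comul (R := ℂ))) ∘ₗ
      (Coalgebra.comul (R := ℂ) (A := A))) =
    (TensorProduct.mk ℂ A (A ⊗[ℂ] A)) 1 ∘ₗ (Coalgebra.comul (R := ℂ)) := by
  set κ := HopfAlgebra.antipode (R := ℂ) (A := A)
  set Δ := Coalgebra.comul (R := ℂ) (A := A)
  set c : A ⊗[ℂ] A →ₗ[ℂ] A := LinearMap.mul' ℂ A ∘ₗ LinearMap.lTensor A κ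
  set K2 : A ⊗[ℂ] (A ⊗[ℂ] A) →ₗ[ℂ] A ⊗[ℂ] A :=
    LinearMap.rTensor A c ∘ₗ (TensorProduct.assoc ℂ A A A).symm.toLinearMap
  have e3 : (LinearMap.rTensor (A ⊗[ℂ] A) c) ∘ₗ
      (TensorProduct.assoc ℂ A A (A ⊗[ℂ] A)).symm.toLinearMap ∘ₗ
      (LinearMap.lTensor A (LinearMap.lTensor A Δ)) =
      (LinearMap.lTensor A Δ) ∘ₗ K2 := by
    apply TensorProduct.ext
    apply LinearMap.ext; intro u
    apply TensorProduct.ext'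
    intro a b
    simp [K2, assoc_symm_tmul]
  have e2 : LinearMap.lTensor A Δ ∘ₗ Δ =
      (TensorProduct.assoc ℂ A A A).toLinearMap ∘ₗ LinearMap.rTensor A Δ ∘ₗ Δ :=
    (Coalgebra.coassoc (R := ℂ) (A := A)).symm
  have e4 : K2 ∘ₗ (TensorProduct.assoc ℂ A A A).toLinearMap = LinearMap.rTensor A c := by
    apply TensorProduct.ext_threefold
    intro a b t
    simp [K2, assoc_symm_tmul]
  have e5 : c ∘ₗ Δ = Algebra.linearMap ℂ A ∘ₗ Coalgebra.counit :=
    HopfAlgebra.mul_antipode_lTensor_comul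
  calc (LinearMap.rTensor (A ⊗[ℂ] A) c) ∘ₗ
      (TensorProduct.assoc ℂ A A (A ⊗[ℂ] A)).symm.toLinearMap ∘ₗ
      (LinearMap.lTensor A (LinearMap.lTensor A Δ ∘ₗ Δ)) ∘ₗ Δ
      = ((LinearMap.rTensor (A ⊗[ℂ] A) c) ∘ₗ
          (TensorProduct.assoc ℂ A A (A ⊗[ℂ] A)).symm.toLinearMap ∘ₗ
          (LinearMap.lTensor A (LinearMap.lTensor A Δ))) ∘ₗ
          (LinearMap.lTensor A Δ ∘ₗ Δ) := by
        rw [LinearMap.lTensor_comp]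
        simp only [LinearMap.comp_assoc]
    _ = (LinearMap.lTensor A Δ) ∘ₗ K2 ∘ₗ
          ((TensorProduct.assoc ℂ A A A).toLinearMap ∘ₗ LinearMap.rTensor A Δ ∘ₗ Δ) := by
        rw [e3, e2]; simp only [LinearMap.comp_assoc]
    _ = (LinearMap.lTensor A Δ) ∘ₗ (K2 ∘ₗ (TensorProduct.assoc ℂ A A A).toLinearMap) ∘ₗ
          LinearMap.rTensor A Δ ∘ₗ Δ := by simp only [LinearMap.comp_assoc]
    _ = (LinearMap.lTensor A Δ) ∘ₗ (LinearMap.rTensor A c ∘ₗ LinearMap.rTensor A Δ) ∘ₗ Δ := by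
        rw [e4]; simp only [LinearMap.comp_assoc]
    _ = (LinearMap.lTensor A Δ) ∘ₗ (LinearMap.rTensor A (Algebra.linearMap ℂ A) ∘ₗ
          LinearMap.rTensor A Coalgebra.counit) ∘ₗ Δ := by
        rw [← LinearMap.rTensor_comp, e5, LinearMap.rTensor_comp]
    _ = (TensorProduct.mk ℂ A (A ⊗[ℂ] A)) 1 ∘ₗ Δ := by
        apply LinearMap.ext; intro d
        simp [Δ, Coalgebra.rTensor_counit_comul, Algebra.linearMap_apply]


section Aux
variable {A Γ : Type*} [Ring A] [HopfAlgebra ℂ A] [AddCommGroup Γ] [Module ℂ Γ]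
variable (act : Γ →ₗ[ℂ] A →ₗ[ℂ] Γ) (ϖ : Γ →ₗ[ℂ] Γ ⊗[ℂ] A)

private lemma braid_aux
    (hactmul : ∀ (θ : Γ) (a b : A), act (act θ a) b = act θ (a * b))
    (hcoassoc : ∀ θ : Γ, LinearMap.rTensor A ϖ (ϖ θ) =
      (TensorProduct.assoc ℂ Γ A A).symm
        (LinearMap.lTensor Γ (Coalgebra.comul (R := ℂ)) (ϖ θ)))
    (hYD : ∀ (θ : Γ) (a : A) (n : ℕ) (θk : Fin n → Γ) (ck : Fin n → A),
      ϖ θ = ∑ i, θk i ⊗ₜ[ℂ] ck i →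
      ∀ (m : ℕ) (a1 a2 a3 : Fin m → A),
        LinearMap.lTensor A (Coalgebra.comul (R := ℂ))
            (Coalgebra.comul (R := ℂ) a) =
          ∑ j, a1 j ⊗ₜ[ℂ] (a2 j ⊗ₜ[ℂ] a3 j) →
      ϖ (act θ a) = ∑ i, ∑ j, act (θk i) (a2 j) ⊗ₜ[ℂ]
        (HopfAlgebra.antipode (R := ℂ) (a1 j) * ck i * a3 j))
    (σ : (Γ ⊗[ℂ] Γ) →ₗ[ℂ] (Γ ⊗[ℂ] Γ))
    (hσ : σ = (LinearMap.lTensor Γ (TensorProduct.lift act)) ∘ₗ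
        (TensorProduct.leftComm ℂ Γ Γ A).toLinearMap ∘ₗ
        (LinearMap.lTensor Γ ϖ)) :
    (LinearMap.rTensor Γ σ) ∘ₗ
        ((TensorProduct.assoc ℂ Γ Γ Γ).symm.toLinearMap ∘ₗ
          (LinearMap.lTensor Γ σ) ∘ₗ (TensorProduct.assoc ℂ Γ Γ Γ).toLinearMap) ∘ₗ
        (LinearMap.rTensor Γ σ) =
      ((TensorProduct.assoc ℂ Γ Γ Γ).symm.toLinearMap ∘ₗ
          (LinearMap.lTensor Γ σ) ∘ₗ (TensorProduct.assoc ℂ Γ Γ Γ).toLinearMap) ∘ₗ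
        (LinearMap.rTensor Γ σ) ∘ₗ
        ((TensorProduct.assoc ℂ Γ Γ Γ).symm.toLinearMap ∘ₗ
          (LinearMap.lTensor Γ σ) ∘ₗ (TensorProduct.assoc ℂ Γ Γ Γ).toLinearMap) := by
  -- basic evaluation lemmas for σ
  have hσap : ∀ (t w : Γ), σ (t ⊗ₜ[ℂ] w) =
      (LinearMap.lTensor Γ (TensorProduct.lift act))
        ((TensorProduct.leftComm ℂ Γ Γ A) (t ⊗ₜ[ℂ] (ϖ w))) := by
    intro t w; simp [hσ, LinearMap.lTensor_tmul]
  set Φ : Γ → (Γ ⊗[ℂ] A →ₗ[ℂ] Γ ⊗[ℂ] Γ) := fun t =>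
    (LinearMap.lTensor Γ (TensorProduct.lift act)) ∘ₗ
      (TensorProduct.leftComm ℂ Γ Γ A).toLinearMap ∘ₗ
      ((TensorProduct.mk ℂ Γ (Γ ⊗[ℂ] A)) t) with hΦdef
  have hΦσ : ∀ t w, σ (t ⊗ₜ[ℂ] w) = Φ t (ϖ w) := by
    intro t w; rw [hσap]; rfl
  have hΦ : ∀ (t w : Γ) (a : A), Φ t (w ⊗ₜ[ℂ] a) = w ⊗ₜ[ℂ] act t a := by
    intro t w a
    simp [hΦdef, TensorProduct.leftComm_tmul]
  have hσrep : ∀ (t w : Γ) (n : ℕ) (wk : Fin n → Γ) (ak : Fin n → A),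
      ϖ w = ∑ i, wk i ⊗ₜ[ℂ] ak i →
      σ (t ⊗ₜ[ℂ] w) = ∑ i, wk i ⊗ₜ[ℂ] act t (ak i) := by
    intro t w n wk ak h
    rw [hΦσ, h, map_sum]
    exact Finset.sum_congr rfl fun i _ => hΦ t _ _
  apply TensorProduct.ext_threefold
  intro x y z
  obtain ⟨n, θk, ck, hθ⟩ := fin_rep (ϖ y)
  obtain ⟨p, ζl, dl, hζ⟩ := fin_rep (ϖ z)
  simp only [LinearMap.comp_apply, LinearEquiv.coe_coe]
  -- the coassociativity rewrite for z
  have hrt : (LinearMap.rTensor A ϖ) (ϖ z) = ∑ l, (ϖ (ζl l)) ⊗ₜ[ℂ] dl l := by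
    rw [hζ, map_sum]; simp only [LinearMap.rTensor_tmul]
  have hco : (LinearMap.rTensor A ϖ) (ϖ z) =
      ∑ l, (TensorProduct.assoc ℂ Γ A A).symm
        (ζl l ⊗ₜ[ℂ] Coalgebra.comul (R := ℂ) (dl l)) := by
    rw [hcoassoc z, hζ, map_sum]
    simp only [LinearMap.lTensor_tmul]
    rw [map_sum]
  -- LHS computation
  have hσz : ∀ t : Γ, σ (t ⊗ₜ[ℂ] z) = ∑ l, ζl l ⊗ₜ[ℂ] act t (dl l) :=
    fun t => hσrep t z p ζl dl hζ
  have hLHS : (LinearMap.rTensor Γ σ)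
      ((TensorProduct.assoc ℂ Γ Γ Γ).symm ((LinearMap.lTensor Γ σ)
        ((TensorProduct.assoc ℂ Γ Γ Γ)
          ((LinearMap.rTensor Γ σ) ((x ⊗ₜ[ℂ] y) ⊗ₜ[ℂ] z))))) =
      ∑ k, ∑ l, (TensorProduct.map (Φ (θk k)) (act (act x (ck k))))
        ((TensorProduct.assoc ℂ Γ A A).symm
          (ζl l ⊗ₜ[ℂ] Coalgebra.comul (R := ℂ) (dl l))) := by
    rw [LinearMap.rTensor_tmul, hσrep x y n θk ck hθ, sum_tmul, map_sum]
    simp only [TensorProduct.assoc_tmul]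
    rw [map_sum]
    simp only [LinearMap.lTensor_tmul, hσz, tmul_sum]
    rw [map_sum]
    simp only [map_sum, TensorProduct.assoc_symm_tmul]
    simp only [LinearMap.rTensor_tmul, hΦσ]
    have : ∀ k, ∑ l, (Φ (θk k)) (ϖ (ζl l)) ⊗ₜ[ℂ] act (act x (ck k)) (dl l) =
        ∑ l, (TensorProduct.map (Φ (θk k)) (act (act x (ck k))))
          ((TensorProduct.assoc ℂ Γ A A).symm
            (ζl l ⊗ₜ[ℂ] Coalgebra.comul (R := ℂ) (dl l))) := by
      intro k
      calc ∑ l, (Φ (θk k)) (ϖ (ζl l)) ⊗ₜ[ℂ] act (act x (ck k)) (dl l)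
          = ∑ l, (TensorProduct.map (Φ (θk k)) (act (act x (ck k))))
              ((ϖ (ζl l)) ⊗ₜ[ℂ] dl l) := by
            simp only [TensorProduct.map_tmul]
        _ = (TensorProduct.map (Φ (θk k)) (act (act x (ck k))))
              ((LinearMap.rTensor A ϖ) (ϖ z)) := by rw [hrt, map_sum]
        _ = _ := by rw [hco, map_sum]
    exact Finset.sum_congr rfl fun k _ => this k
  -- RHS computation
  have hRHS : (TensorProduct.assoc ℂ Γ Γ Γ).symm ((LinearMap.lTensor Γ σ)
      ((TensorProduct.assoc ℂ Γ Γ Γ) ((LinearMap.rTensor Γ σ)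
        ((TensorProduct.assoc ℂ Γ Γ Γ).symm ((LinearMap.lTensor Γ σ)
          ((TensorProduct.assoc ℂ Γ Γ Γ) ((x ⊗ₜ[ℂ] y) ⊗ₜ[ℂ] z))))))) =
      ∑ l, (TensorProduct.assoc ℂ Γ Γ Γ).symm ((LinearMap.lTensor Γ σ)
        ((TensorProduct.assoc ℂ Γ Γ Γ) ((TensorProduct.map (Φ x) (act y))
          ((TensorProduct.assoc ℂ Γ A A).symm
            (ζl l ⊗ₜ[ℂ] Coalgebra.comul (R := ℂ) (dl l)))))) := by
    rw [TensorProduct.assoc_tmul, LinearMap.lTensor_tmul, hσz y, tmul_sum, map_sum]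
    simp only [TensorProduct.assoc_symm_tmul]
    rw [map_sum]
    simp only [LinearMap.rTensor_tmul, hΦσ]
    have : ∑ l, (Φ x) (ϖ (ζl l)) ⊗ₜ[ℂ] act y (dl l) =
        ∑ l, (TensorProduct.map (Φ x) (act y))
          ((TensorProduct.assoc ℂ Γ A A).symm
            (ζl l ⊗ₜ[ℂ] Coalgebra.comul (R := ℂ) (dl l))) := by
      calc ∑ l, (Φ x) (ϖ (ζl l)) ⊗ₜ[ℂ] act y (dl l)
          = ∑ l, (TensorProduct.map (Φ x) (act y)) ((ϖ (ζl l)) ⊗ₜ[ℂ] dl l) := by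
            simp only [TensorProduct.map_tmul]
        _ = (TensorProduct.map (Φ x) (act y)) ((LinearMap.rTensor A ϖ) (ϖ z)) := by
            rw [hrt, map_sum]
        _ = _ := by rw [hco, map_sum]
    rw [this, map_sum, map_sum, map_sum]
  rw [hLHS, hRHS, Finset.sum_comm]
  refine Finset.sum_congr rfl fun l _ => ?_
  set w := ζl l
  set d := dl l
  -- key pointwise identity
  obtain ⟨q, u, v, hd⟩ := fin_rep (Coalgebra.comul (R := ℂ) d)
  have hrep3 := fun j => fin_rep3
    ((LinearMap.lTensor A (Coalgebra.comul (R := ℂ)))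
      (Coalgebra.comul (R := ℂ) (v j)))
  choose m a1 a2 a3 hA using hrep3
  have hYDj : ∀ j, ϖ (act y (v j)) = ∑ k, ∑ r, act (θk k) (a2 j r) ⊗ₜ[ℂ]
      (HopfAlgebra.antipode (R := ℂ) (a1 j r) * ck k * a3 j r) :=
    fun j => hYD y (v j) n θk ck hθ (m j) (a1 j) (a2 j) (a3 j) (hA j)
  -- evaluate LHS of the key identity
  have hkeyL : ∀ k, (TensorProduct.map (Φ (θk k)) (act (act x (ck k))))
      ((TensorProduct.assoc ℂ Γ A A).symm
        (w ⊗ₜ[ℂ] Coalgebra.comul (R := ℂ) d)) =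
      ∑ j, (w ⊗ₜ[ℂ] act (θk k) (u j)) ⊗ₜ[ℂ] act x (ck k * v j) := by
    intro k
    rw [hd, tmul_sum, map_sum, map_sum]
    simp only [TensorProduct.assoc_symm_tmul, TensorProduct.map_tmul, hΦ, hactmul]
  -- evaluate RHS of the key identity
  have hσuv : ∀ j, σ (act x (u j) ⊗ₜ[ℂ] act y (v j)) =
      ∑ k, ∑ r, act (θk k) (a2 j r) ⊗ₜ[ℂ]
        act x (u j * (HopfAlgebra.antipode (R := ℂ) (a1 j r) * ck k * a3 j r)) := by
    intro j
    rw [hΦσ, hYDj j, map_sum]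
    refine Finset.sum_congr rfl fun k _ => ?_
    rw [map_sum]
    refine Finset.sum_congr rfl fun r _ => ?_
    rw [hΦ, hactmul]
  have hkeyR : (TensorProduct.assoc ℂ Γ Γ Γ).symm ((LinearMap.lTensor Γ σ)
      ((TensorProduct.assoc ℂ Γ Γ Γ) ((TensorProduct.map (Φ x) (act y))
        ((TensorProduct.assoc ℂ Γ A A).symm
          (w ⊗ₜ[ℂ] Coalgebra.comul (R := ℂ) d))))) =
      ∑ j, ∑ k, ∑ r, (w ⊗ₜ[ℂ] act (θk k) (a2 j r)) ⊗ₜ[ℂ]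
        act x (u j * (HopfAlgebra.antipode (R := ℂ) (a1 j r) * ck k * a3 j r)) := by
    rw [hd, tmul_sum, map_sum, map_sum]
    simp only [TensorProduct.assoc_symm_tmul, TensorProduct.map_tmul, hΦ]
    rw [map_sum]
    simp only [TensorProduct.assoc_tmul]
    rw [map_sum]
    simp only [LinearMap.lTensor_tmul, hσuv, tmul_sum]
    rw [map_sum]
    simp only [map_sum, TensorProduct.assoc_symm_tmul]
  rw [hkeyR, Finset.sum_comm]
  refine Finset.sum_congr rfl fun k _ => ?_
  rw [hkeyL k]
  -- the antipode collapse, for fixed k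
  set κ := HopfAlgebra.antipode (R := ℂ) (A := A) with hκdef
  set N : A ⊗[ℂ] (A ⊗[ℂ] A) →ₗ[ℂ] (Γ ⊗[ℂ] Γ) ⊗[ℂ] Γ :=
    (TensorProduct.map ((TensorProduct.mk ℂ Γ Γ w) ∘ₗ act (θk k))
      ((act x) ∘ₗ (LinearMap.mul' ℂ A) ∘ₗ
        (LinearMap.lTensor A (LinearMap.mulLeft ℂ (ck k))))) ∘ₗ
      (TensorProduct.leftComm ℂ A A A).toLinearMap with hNdef
  have hN : ∀ b s t : A, N (b ⊗ₜ[ℂ] (s ⊗ₜ[ℂ] t)) =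
      (w ⊗ₜ[ℂ] act (θk k) s) ⊗ₜ[ℂ] act x (b * (ck k * t)) := by
    intro b s t
    simp [hNdef, TensorProduct.leftComm_tmul, LinearMap.mul'_apply]
  set K : A ⊗[ℂ] (A ⊗[ℂ] (A ⊗[ℂ] A)) →ₗ[ℂ] A ⊗[ℂ] (A ⊗[ℂ] A) :=
    (LinearMap.rTensor (A ⊗[ℂ] A) (LinearMap.mul' ℂ A ∘ₗ LinearMap.lTensor A κ)) ∘ₗ
      (TensorProduct.assoc ℂ A A (A ⊗[ℂ] A)).symm.toLinearMap with hKdef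
  have hK : ∀ (b a : A) (w' : A ⊗[ℂ] A), K (b ⊗ₜ[ℂ] (a ⊗ₜ[ℂ] w')) =
      (b * κ a) ⊗ₜ[ℂ] w' := by
    intro b a w'
    simp [hKdef, TensorProduct.assoc_symm_tmul, LinearMap.mul'_apply]
  have hcollapse : K ((LinearMap.lTensor A
      (LinearMap.lTensor A (Coalgebra.comul (R := ℂ)) ∘ₗ Coalgebra.comul (R := ℂ)))
        (Coalgebra.comul (R := ℂ) d)) = (1 : A) ⊗ₜ[ℂ] Coalgebra.comul (R := ℂ) d := by
    have := LinearMap.congr_fun (collapse (A := A)) d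
    simpa [hKdef, hκdef, LinearMap.comp_apply] using this
  calc ∑ j, (w ⊗ₜ[ℂ] act (θk k) (u j)) ⊗ₜ[ℂ] act x (ck k * v j)
      = ∑ j, N ((1 : A) ⊗ₜ[ℂ] (u j ⊗ₜ[ℂ] v j)) := by
        refine Finset.sum_congr rfl fun j _ => ?_
        rw [hN, one_mul]
    _ = N ((1 : A) ⊗ₜ[ℂ] Coalgebra.comul (R := ℂ) d) := by
        rw [hd, tmul_sum, map_sum]
    _ = N (K ((LinearMap.lTensor A
          (LinearMap.lTensor A (Coalgebra.comul (R := ℂ)) ∘ₗ Coalgebra.comul (R := ℂ)))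
            (Coalgebra.comul (R := ℂ) d))) := by rw [hcollapse]
    _ = ∑ j, N (K (u j ⊗ₜ[ℂ] ((LinearMap.lTensor A (Coalgebra.comul (R := ℂ)))
          (Coalgebra.comul (R := ℂ) (v j))))) := by
        rw [hd, map_sum]
        simp only [LinearMap.lTensor_tmul, LinearMap.comp_apply, map_sum]
    _ = ∑ j, ∑ r, (w ⊗ₜ[ℂ] act (θk k) (a2 j r)) ⊗ₜ[ℂ]
          act x (u j * (κ (a1 j r) * ck k * a3 j r)) := by
        refine Finset.sum_congr rfl fun j _ => ?_
        rw [hA j, tmul_sum, map_sum, map_sum]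
        refine Finset.sum_congr rfl fun r _ => ?_
        rw [hK, hN]
        congr 1
        simp [mul_assoc]

end Aux


theorem flip_over_braid_relation
    {A Γ : Type*} [Ring A] [HopfAlgebra ℂ A]
    [AddCommGroup Γ] [Module ℂ Γ]
    (hκ : Function.Bijective (HopfAlgebra.antipode (R := ℂ) (A := A)))
    -- right A-module structure ϑ ∘ a
    (act : Γ →ₗ[ℂ] A →ₗ[ℂ] Γ)
    (hact1 : ∀ θ : Γ, act θ 1 = θ)
    (hactmul : ∀ (θ : Γ) (a b : A), act (act θ a) b = act θ (a * b))
    -- right A-coaction ϖ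
    (ϖ : Γ →ₗ[ℂ] Γ ⊗[ℂ] A)
    (hcoassoc : ∀ θ : Γ, LinearMap.rTensor A ϖ (ϖ θ) =
      (TensorProduct.assoc ℂ Γ A A).symm
        (LinearMap.lTensor Γ (Coalgebra.comul (R := ℂ)) (ϖ θ)))
    (hcounit : ∀ θ : Γ, TensorProduct.rid ℂ Γ
      (LinearMap.lTensor Γ (Coalgebra.counit (R := ℂ)) (ϖ θ)) = θ)
    -- Yetter–Drinfeld-type compatibility:
    -- ϖ(ϑ ∘ a) = Σ_k ϑ_k ∘ a⁽²⁾ ⊗ κ(a⁽¹⁾) c_k a⁽³⁾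
    (hYD : ∀ (θ : Γ) (a : A) (n : ℕ) (θk : Fin n → Γ) (ck : Fin n → A),
      ϖ θ = ∑ i, θk i ⊗ₜ[ℂ] ck i →
      ∀ (m : ℕ) (a1 a2 a3 : Fin m → A),
        LinearMap.lTensor A (Coalgebra.comul (R := ℂ))
            (Coalgebra.comul (R := ℂ) a) =
          ∑ j, a1 j ⊗ₜ[ℂ] (a2 j ⊗ₜ[ℂ] a3 j) →
      ϖ (act θ a) = ∑ i, ∑ j, act (θk i) (a2 j) ⊗ₜ[ℂ]
        (HopfAlgebra.antipode (R := ℂ) (a1 j) * ck i * a3 j)) :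
    -- the flip-over operator σ satisfies the braid relation
    letI σ : (Γ ⊗[ℂ] Γ) →ₗ[ℂ] (Γ ⊗[ℂ] Γ) :=
      (LinearMap.lTensor Γ (TensorProduct.lift act)) ∘ₗ
        (TensorProduct.leftComm ℂ Γ Γ A).toLinearMap ∘ₗ
        (LinearMap.lTensor Γ ϖ)
    (LinearMap.rTensor Γ σ) ∘ₗ
        ((TensorProduct.assoc ℂ Γ Γ Γ).symm.toLinearMap ∘ₗ
          (LinearMap.lTensor Γ σ) ∘ₗ (TensorProduct.assoc ℂ Γ Γ Γ).toLinearMap) ∘ₗ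
        (LinearMap.rTensor Γ σ) =
      ((TensorProduct.assoc ℂ Γ Γ Γ).symm.toLinearMap ∘ₗ
          (LinearMap.lTensor Γ σ) ∘ₗ (TensorProduct.assoc ℂ Γ Γ Γ).toLinearMap) ∘ₗ
        (LinearMap.rTensor Γ σ) ∘ₗ
        ((TensorProduct.assoc ℂ Γ Γ Γ).symm.toLinearMap ∘ₗ
          (LinearMap.lTensor Γ σ) ∘ₗ (TensorProduct.assoc ℂ Γ Γ Γ).toLinearMap) :=
  braid_aux act ϖ hactmul hcoassoc hYD _ rfl
end
end
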